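/- arXiv:2209.05719 — 7 statements merged into one kernel-verified Lean document; each statement's English description precedes it below -/
import Mathlib

section
/- Let C > 0, m > 0, and let R_0 = ((m+1)^2/(2C))^{1/(m+2)}. If λ : [0,R] → ℝ with R ≤ R_0 solves the scalar Riccati equation λ'(x) + λ(x)^2 - C x^m = 0 with λ(0) = 0, then for all x ∈ [0,R]: (C/(2(m+1))) x^{m+1} ≤ λ(x) ≤ (C/(m+1)) x^{m+1}. -/
/-- Scalar Riccati bounds: if `λ' + λ² - C xᵐ = 0`, `λ(0)=0`, and `R ≤ ((m+1)²/(2C))^{1/(m+2)}`,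
then `(C/(2(m+1))) x^{m+1} ≤ λ(x) ≤ (C/(m+1)) x^{m+1}` on `[0,R]`. -/
theorem stmt0 (C m R : ℝ) (hC : 0 < C) (hm : 0 < m)
    (hR : R ≤ ((m+1)^2 / (2*C)) ^ ((1:ℝ)/(m+2)))
    (lam : ℝ → ℝ) (h0 : lam 0 = 0)
    (hode : ∀ x ∈ Set.Icc (0:ℝ) R, HasDerivAt lam (C * x ^ m - (lam x)^2) x) :
    ∀ x ∈ Set.Icc (0:ℝ) R,
      C / (2*(m+1)) * x ^ (m+1) ≤ lam x ∧ lam x ≤ C / (m+1) * x ^ (m+1) := by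
  have hm1 : (0:ℝ) < m + 1 := by linarith
  have hm2 : (0:ℝ) < m + 2 := by linarith
  rcases lt_or_ge R 0 with hRneg | hR0
  · intro x hx
    exact absurd (hx.1.trans hx.2) (not_le.2 hRneg)
  -- derivative of c * x^(m+1)
  have hpow : ∀ (c x : ℝ), HasDerivAt (fun y => c * y ^ (m+1)) (c * ((m+1) * x ^ m)) x := by
    intro c x
    have h := (Real.hasDerivAt_rpow_const (p := m+1) (x := x) (Or.inr (by linarith))).const_mul c
    simpa [add_sub_cancel_right] using h
  -- key inequality
  have hkey : ∀ x ∈ Set.Icc (0:ℝ) R, (C/(2*(m+1)) * x ^ (m+1))^2 ≤ C/2 * x ^ m := by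
    intro x hx
    rcases eq_or_lt_of_le hx.1 with h | hxpos
    · rw [← h, Real.zero_rpow (by positivity), Real.zero_rpow (ne_of_gt hm)]
      norm_num
    · have hx2 : x ^ (m+2) ≤ (m+1)^2/(2*C) := by
        calc x ^ (m+2) ≤ ((((m+1)^2/(2*C)) ^ ((1:ℝ)/(m+2))) : ℝ) ^ (m+2) :=
              Real.rpow_le_rpow hxpos.le (le_trans hx.2 hR) (by positivity)
          _ = (m+1)^2/(2*C) := by
              rw [← Real.rpow_mul (by positivity), one_div, inv_mul_cancel₀ (ne_of_gt hm2),
                Real.rpow_one]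
      have hsq : (x ^ (m+1))^2 = x ^ m * x ^ (m+2) := by
        rw [sq, ← Real.rpow_add hxpos, show (m+1)+(m+1) = m + (m+2) by ring,
          Real.rpow_add hxpos]
      have hxm : 0 < x ^ m := Real.rpow_pos_of_pos hxpos m
      have hconst : (C/(2*(m+1)))^2 * ((m+1)^2/(2*C)) = C/8 := by
        field_simp
        ring
      rw [mul_pow, hsq]
      have h1 : (C/(2*(m+1)))^2 * (x ^ m * x ^ (m+2))
          ≤ (C/(2*(m+1)))^2 * (x ^ m * ((m+1)^2/(2*C))) :=
        mul_le_mul_of_nonneg_left (mul_le_mul_of_nonneg_left hx2 hxm.le) (sq_nonneg _)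
      calc (C/(2*(m+1)))^2 * (x ^ m * x ^ (m+2))
          ≤ (C/(2*(m+1)))^2 * (x ^ m * ((m+1)^2/(2*C))) := h1
        _ = (C/(2*(m+1)))^2 * ((m+1)^2/(2*C)) * x ^ m := by ring
        _ = C/8 * x ^ m := by rw [hconst]
        _ ≤ C/2 * x ^ m := by nlinarith
  -- upper bound
  have hupper : ∀ x ∈ Set.Icc (0:ℝ) R, lam x ≤ C/(m+1) * x ^ (m+1) := by
    have := image_le_of_deriv_right_le_deriv_boundary
      (f := lam) (f' := fun x => C * x ^ m - (lam x)^2) (a := 0) (b := R)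
      (B := fun x => C/(m+1) * x ^ (m+1)) (B' := fun x => C/(m+1) * ((m+1) * x ^ m))
      (fun y hy => (hode y hy).continuousAt.continuousWithinAt)
      (fun y hy => (hode y (Set.Ico_subset_Icc_self hy)).hasDerivWithinAt)
      (by
        show lam 0 ≤ C/(m+1) * (0:ℝ) ^ (m+1)
        rw [h0, Real.zero_rpow (by positivity)]
        simp)
      (fun y _ => ((hpow (C/(m+1)) y)).continuousAt.continuousWithinAt)
      (fun y _ => (hpow (C/(m+1)) y).hasDerivWithinAt)
      (by
        intro y hy
        show C * y ^ m - (lam y)^2 ≤ C/(m+1) * ((m+1) * y ^ m)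
        have hc : C/(m+1) * ((m+1) * y ^ m) = C * y ^ m := by
          field_simp
        rw [hc]
        nlinarith [sq_nonneg (lam y)])
    exact fun x hx => this hx
  -- lower bound with perturbation
  have hlow : ∀ ε : ℝ, 0 < ε → ε * (1+R)^2 < 1 →
      ∀ x ∈ Set.Icc (0:ℝ) R, C/(2*(m+1)) * x ^ (m+1) - ε*(1+x) ≤ lam x := by
    intro ε hε hεR
    have hf' : ∀ x : ℝ, HasDerivAt (fun y => C/(2*(m+1)) * y ^ (m+1) - ε*(1+y))
        (C/(2*(m+1)) * ((m+1) * x ^ m) - ε) x := by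
      intro x
      have h2 : HasDerivAt (fun y : ℝ => ε*(1+y)) ε x := by
        simpa using ((hasDerivAt_id x).const_add (1:ℝ)).const_mul ε
      exact (hpow (C/(2*(m+1))) x).sub h2
    have := image_le_of_deriv_right_lt_deriv_boundary'
      (f := fun y => C/(2*(m+1)) * y ^ (m+1) - ε*(1+y))
      (f' := fun y => C/(2*(m+1)) * ((m+1) * y ^ m) - ε) (a := 0) (b := R)
      (B := lam) (B' := fun y => C * y ^ m - (lam y)^2)
      (fun y _ => (hf' y).continuousAt.continuousWithinAt)
      (fun y _ => (hf' y).hasDerivWithinAt)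
      (by
        show C/(2*(m+1)) * (0:ℝ) ^ (m+1) - ε*(1+0) ≤ lam 0
        rw [h0, Real.zero_rpow (by positivity)]
        nlinarith)
      (fun y hy => (hode y hy).continuousAt.continuousWithinAt)
      (fun y hy => (hode y (Set.Ico_subset_Icc_self hy)).hasDerivWithinAt)
      (by
        intro y hy heq
        have hy' : y ∈ Set.Icc (0:ℝ) R := Set.Ico_subset_Icc_self hy
        have hkeyy := hkey y hy'
        show C/(2*(m+1)) * ((m+1) * y ^ m) - ε < C * y ^ m - (lam y)^2
        have hlam : lam y = C/(2*(m+1)) * y ^ (m+1) - ε*(1+y) := heq.symm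
        have hapos : 0 ≤ C/(2*(m+1)) * y ^ (m+1) := by
          have : (0:ℝ) ≤ y ^ (m+1) := Real.rpow_nonneg hy'.1 _
          positivity
        have hbpos : 0 ≤ ε*(1+y) := by nlinarith [hy'.1, hε.le]
        have hsq2 : (lam y)^2 ≤ (C/(2*(m+1)) * y ^ (m+1))^2 + (ε*(1+y))^2 := by
          nlinarith [hlam, hapos, hbpos]
        have hb2 : (ε*(1+y))^2 < ε := by
          have h1y : (1+y)^2 ≤ (1+R)^2 := by nlinarith [hy'.1, hy'.2]
          have e1 : ε^2*(1+y)^2 ≤ ε^2*(1+R)^2 := mul_le_mul_of_nonneg_left h1y (sq_nonneg ε)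
          have e2 : ε*(ε*(1+R)^2) < ε*1 := mul_lt_mul_of_pos_left hεR hε
          nlinarith
        have hc : C/(2*(m+1)) * ((m+1) * y ^ m) = C/2 * y ^ m := by
          field_simp
        rw [hc]
        nlinarith)
    exact fun x hx => this hx
  -- combine
  intro x hx
  refine ⟨le_of_forall_pos_le_add ?_, hupper x hx⟩
  intro η hη
  have h1R : (0:ℝ) < 1 + R := by linarith
  set ε := min (η/(1+R)) (1/(2*(1+R)^2)) with hεdef
  have hε1 : 0 < ε := lt_min (by positivity) (by positivity)
  have hε2 : ε * (1+R)^2 < 1 := by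
    have h := mul_le_mul_of_nonneg_right
      (min_le_right (η/(1+R)) (1/(2*(1+R)^2))) (by positivity : (0:ℝ) ≤ (1+R)^2)
    have h2 : 1/(2*(1+R)^2) * (1+R)^2 = 1/2 := by field_simp
    rw [h2] at h
    rw [← hεdef] at h
    linarith
  have h := hlow ε hε1 hε2 x hx
  have h3 : ε * (1+x) ≤ η := by
    have l1 : ε ≤ η/(1+R) := min_le_left _ _
    have l2 : 1 + x ≤ 1 + R := by linarith [hx.2]
    have l3 : ε*(1+x) ≤ (η/(1+R))*(1+R) :=
      mul_le_mul l1 l2 (by linarith [hx.1]) (by positivity)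
    calc ε*(1+x) ≤ η/(1+R)*(1+R) := l3
      _ = η := by field_simp
  linarith
end

section
/- Let f : [a,b] → ℝ be a C^1, strictly decreasing function with f(b) > 0, and suppose there exist constants 0 < Q_1 < Q_2, α > 0, β ∈ (0,1) with αβ > 1 such that -Q_2 (f(τ)^α - f(b)^α)^β ≤ f'(τ) ≤ -Q_1 (f(τ)^α - f(b)^α)^β for all τ ∈ [a,b]. Then for all τ ∈ [a,b], f(τ) ≥ (f(a)^{1-αβ} + Q_2(αβ - 1)(τ - a))^{1/(1-αβ)}. -/
/-- Lower-bound half of the ODE comparison lemma: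
`-Q₂(fᵅ - f(b)ᵅ)^β ≤ f' ≤ -Q₁(fᵅ - f(b)ᵅ)^β` with `αβ > 1` implies
`f(τ) ≥ (f(a)^{1-αβ} + Q₂(αβ-1)(τ-a))^{1/(1-αβ)}`. -/
theorem stmt4 (a b α β Q₁ Q₂ : ℝ) (hab : a ≤ b)
    (hQ₁ : 0 < Q₁) (hQ₁₂ : Q₁ < Q₂) (hα : 0 < α) (hβ : β ∈ Set.Ioo (0:ℝ) 1)
    (hαβ : 1 < α * β)
    (f f' : ℝ → ℝ)
    (hderiv : ∀ τ ∈ Set.Icc a b, HasDerivAt f (f' τ) τ)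
    (hanti : StrictAntiOn f (Set.Icc a b))
    (hfb : 0 < f b)
    (hbound : ∀ τ ∈ Set.Icc a b,
      -Q₂ * ((f τ) ^ α - (f b) ^ α) ^ β ≤ f' τ ∧
      f' τ ≤ -Q₁ * ((f τ) ^ α - (f b) ^ α) ^ β) :
    ∀ τ ∈ Set.Icc a b,
      (f a ^ (1 - α*β) + Q₂ * (α*β - 1) * (τ - a)) ^ (1/(1 - α*β)) ≤ f τ := by
  obtain ⟨hβ0, hβ1⟩ := hβ
  set c : ℝ := 1 - α * β with hc
  have hc0 : c < 0 := by simp only [hc]; linarith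
  have hQ₂ : 0 < Q₂ := hQ₁.trans hQ₁₂
  have hbmem : b ∈ Set.Icc a b := Set.right_mem_Icc.2 hab
  have hfpos : ∀ x ∈ Set.Icc a b, 0 < f x := fun x hx =>
    hfb.trans_le (hanti.antitoneOn hx hbmem hx.2)
  -- the auxiliary function h
  set h : ℝ → ℝ := fun x => f x ^ c - Q₂ * (α * β - 1) * x with hh
  have hhderiv : ∀ x ∈ Set.Icc a b,
      HasDerivAt h (f' x * c * f x ^ (c - 1) - Q₂ * (α * β - 1)) x := by
    intro x hx
    have h1 : HasDerivAt (fun x => f x ^ c) (f' x * c * f x ^ (c - 1)) x :=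
      (hderiv x hx).rpow_const (Or.inl (hfpos x hx).ne')
    have h2 : HasDerivAt (fun x => Q₂ * (α * β - 1) * x) (Q₂ * (α * β - 1)) x := by
      simpa using (hasDerivAt_id x).const_mul (Q₂ * (α * β - 1))
    exact h1.sub h2
  have hderbound : ∀ x ∈ Set.Icc a b, f' x * c * f x ^ (c - 1) - Q₂ * (α * β - 1) ≤ 0 := by
    intro x hx
    have hfx := hfpos x hx
    have hfbx : f b ≤ f x := hanti.antitoneOn hx hbmem hx.2
    have hab1 : (f x ^ α - f b ^ α) ^ β ≤ f x ^ (α * β) := by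
      rw [Real.rpow_mul hfx.le]
      refine Real.rpow_le_rpow (sub_nonneg.2 ?_) ?_ hβ0.le
      · exact Real.rpow_le_rpow hfb.le hfbx hα.le
      · exact sub_le_self _ (Real.rpow_nonneg hfb.le α)
    have hlow : -Q₂ * f x ^ (α * β) ≤ f' x := by
      have := (hbound x hx).1
      nlinarith [this]
    have hpow : f x ^ (α * β) * f x ^ (c - 1) = 1 := by
      rw [← Real.rpow_add hfx, show α * β + (c - 1) = 0 by rw [hc]; ring, Real.rpow_zero]
    have hneg : c * f x ^ (c - 1) < 0 :=
      mul_neg_of_neg_of_pos hc0 (Real.rpow_pos_of_pos hfx _)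
    have : f' x * (c * f x ^ (c - 1)) ≤ (-Q₂ * f x ^ (α * β)) * (c * f x ^ (c - 1)) :=
      mul_le_mul_of_nonpos_right hlow hneg.le
    calc f' x * c * f x ^ (c - 1) - Q₂ * (α * β - 1)
        = f' x * (c * f x ^ (c - 1)) - Q₂ * (α * β - 1) := by ring
      _ ≤ (-Q₂ * f x ^ (α * β)) * (c * f x ^ (c - 1)) - Q₂ * (α * β - 1) := by linarith
      _ = -Q₂ * c * (f x ^ (α * β) * f x ^ (c - 1)) - Q₂ * (α * β - 1) := by ring
      _ = 0 := by rw [hpow]; simp [hc]; ring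
  have hanti_h : AntitoneOn h (Set.Icc a b) := by
    refine antitoneOn_of_deriv_nonpos (convex_Icc a b)
      (fun x hx => (hhderiv x hx).continuousAt.continuousWithinAt)
      (fun x hx => ((hhderiv x (interior_subset hx)).differentiableAt.differentiableWithinAt))
      (fun x hx => ?_)
    rw [(hhderiv x (interior_subset hx)).deriv]
    exact hderbound x (interior_subset hx)
  intro τ hτ
  have hamem : a ∈ Set.Icc a b := Set.left_mem_Icc.2 hab
  have hkey : h τ ≤ h a := hanti_h hamem hτ hτ.1
  have hle : f τ ^ c ≤ f a ^ c + Q₂ * (α * β - 1) * (τ - a) := by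
    simp only [hh] at hkey; linarith
  have hτpos : 0 < f τ ^ c := Real.rpow_pos_of_pos (hfpos τ hτ) c
  have hRpos : 0 < f a ^ c + Q₂ * (α * β - 1) * (τ - a) := hτpos.trans_le hle
  have hfin := Real.rpow_le_rpow_of_nonpos hτpos hle
    (le_of_lt (div_neg_of_pos_of_neg one_pos hc0))
  have hid : (f τ ^ c) ^ (1 / c) = f τ := by
    rw [← Real.rpow_mul (hfpos τ hτ).le, mul_one_div, div_self hc0.ne, Real.rpow_one]
  rw [hid] at hfin
  exact hfin
end

section
/- Let f : [a,b] → ℝ be a C^1, strictly decreasing function with f(b) > 0, and suppose there exist constants 0 < Q_1, α > 0, β ∈ (0,1) with αβ > 1 such that f'(τ) ≤ -Q_1 (f(τ)^α - f(b)^α)^β for all τ ∈ [a,b]. Then with Q_0 = B(β, 1-β)^{1/(αβ-1)} (B the beta function), one has f(τ) ≤ Q_0 (f(a)^{1-αβ} + Q_1(αβ - 1)(τ - a))^{1/(1-αβ)} for all τ ∈ [a,b]. -/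
/-!
Normalise `x(τ) = (f(τ)/f(b))^{1-αβ}`, which lies in `(0,1)` for `τ < b`. The differential
inequality becomes `x' ≥ k (1 - x^γ)^β` with `γ = α/(αβ-1) ≥ 1` and
`k = Q₁(αβ-1) f(b)^{αβ-1}`, so `Φ(x(τ)) - kτ` is nondecreasing for
`Φ(x) = ∫₀ˣ (1 - y^γ)^{-β} dy`. Since `x ≤ Φ(x) ≤ B(β,1-β) x` (substitute `y = xz` and use
`(xz)^γ ≤ z`), this gives `x(a) + k(τ-a) ≤ B(β,1-β) x(τ)`; undoing the normalisation and taking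
the `1/(1-αβ)`-th power yields the claim, and the endpoint `τ = b`, where `x = 1`, follows by
continuity.
-/

open MeasureTheory intervalIntegral Set

noncomputable def comparisonPrimitive (β γ x : ℝ) : ℝ :=
  ∫ y in (0:ℝ)..x, (1 - y ^ γ) ^ (-β)

section ComparisonPrimitive

variable {β γ : ℝ}

lemma continuousAt_one_sub_rpow_rpow_neg (hγ : 0 < γ) {y : ℝ} (hy0 : 0 ≤ y) (hy1 : y < 1) :
    ContinuousAt (fun y : ℝ => (1 - y ^ γ) ^ (-β)) y :=
  (continuousAt_const.sub (Real.continuousAt_rpow_const y γ (Or.inr hγ.le))).rpow_const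
    (Or.inl (sub_pos.2 (Real.rpow_lt_one hy0 hy1 hγ)).ne')

lemma intervalIntegrable_one_sub_rpow_rpow_neg (hγ : 0 < γ) {x : ℝ} (hx0 : 0 ≤ x)
    (hx1 : x < 1) : IntervalIntegrable (fun y : ℝ => (1 - y ^ γ) ^ (-β)) volume 0 x :=
  ContinuousOn.intervalIntegrable fun _ hy => by
    rw [uIcc_of_le hx0] at hy
    exact (continuousAt_one_sub_rpow_rpow_neg hγ hy.1 (hy.2.trans_lt hx1)).continuousWithinAt

lemma hasDerivAt_comparisonPrimitive (hγ : 0 < γ) {x : ℝ} (hx : x ∈ Ioo (0:ℝ) 1) :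
    HasDerivAt (comparisonPrimitive β γ) ((1 - x ^ γ) ^ (-β)) x :=
  integral_hasDerivAt_right (intervalIntegrable_one_sub_rpow_rpow_neg hγ hx.1.le hx.2)
    (ContinuousAt.stronglyMeasurableAtFilter isOpen_Ioo
      (fun _ hy => continuousAt_one_sub_rpow_rpow_neg hγ hy.1.le hy.2) x hx)
    (continuousAt_one_sub_rpow_rpow_neg hγ hx.1.le hx.2)

lemma le_comparisonPrimitive (hβ : 0 ≤ β) (hγ : 0 < γ) {x : ℝ} (hx0 : 0 ≤ x) (hx1 : x < 1) :
    x ≤ comparisonPrimitive β γ x := by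
  have h := integral_mono_on hx0 intervalIntegrable_const
    (intervalIntegrable_one_sub_rpow_rpow_neg (β := β) hγ hx0 hx1) fun y hy =>
      Real.one_le_rpow_of_pos_of_le_one_of_nonpos
        (sub_pos.2 (Real.rpow_lt_one hy.1 (hy.2.trans_lt hx1) hγ))
        (sub_le_self _ (Real.rpow_nonneg hy.1 γ)) (neg_nonpos.2 hβ)
  simpa [comparisonPrimitive] using h

lemma intervalIntegrable_rpow_mul_one_sub_rpow (hβ0 : 0 < β) (hβ1 : β < 1) :
    IntervalIntegrable (fun t : ℝ => t ^ (β - 1) * (1 - t) ^ (-β)) volume 0 1 := by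
  have left : IntervalIntegrable (fun t : ℝ => t ^ (β - 1) * (1 - t) ^ (-β)) volume 0 (1/2) :=
    (intervalIntegrable_rpow' (by linarith)).mul_continuousOn <|
      ((continuous_const.sub continuous_id).continuousOn).rpow_const fun t ht => by
        rw [uIcc_of_le (by norm_num)] at ht
        exact Or.inl (show (1:ℝ) - t ≠ 0 by linarith [ht.2])
  have right : IntervalIntegrable (fun t : ℝ => t ^ (β - 1) * (1 - t) ^ (-β)) volume (1/2) 1 := by
    have reflected : IntervalIntegrable (fun t : ℝ => (1 - t) ^ (-β)) volume (1/2) 1 := by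
      convert ((intervalIntegrable_rpow' (r := -β) (by linarith)).comp_sub_left
        (1 : ℝ) (a := 0) (b := 1/2)).symm using 1 <;> norm_num
    refine reflected.continuousOn_mul (continuous_id.continuousOn.rpow_const fun t ht => ?_)
    rw [uIcc_of_le (by norm_num)] at ht
    exact Or.inl (show t ≠ 0 by linarith [ht.1])
  exact left.trans right

lemma comparisonPrimitive_le (hβ0 : 0 < β) (hβ1 : β < 1) (hγ : 1 ≤ γ) {x : ℝ}
    (hx0 : 0 < x) (hx1 : x < 1) :
    comparisonPrimitive β γ x ≤ (∫ t in (0:ℝ)..1, t ^ (β - 1) * (1 - t) ^ (-β)) * x := by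
  have hγ0 : 0 < γ := one_pos.trans_le hγ
  have hscale : comparisonPrimitive β γ x = x * ∫ z in (0:ℝ)..1, (1 - (x * z) ^ γ) ^ (-β) := by
    simpa [comparisonPrimitive] using (smul_integral_comp_mul_left (a := 0) (b := 1)
      (fun y : ℝ => (1 - y ^ γ) ^ (-β)) x).symm
  rw [hscale, mul_comm _ x]
  refine mul_le_mul_of_nonneg_left (integral_mono_on_of_le_Ioo zero_le_one ?_
    (intervalIntegrable_rpow_mul_one_sub_rpow hβ0 hβ1) fun z hz => ?_) hx0.le
  · refine ContinuousOn.intervalIntegrable fun z hz => ?_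
    rw [uIcc_of_le zero_le_one] at hz
    exact ((continuousAt_one_sub_rpow_rpow_neg hγ0 (mul_nonneg hx0.le hz.1)
      (by nlinarith [hz.2])).comp (continuous_const_mul x).continuousAt).continuousWithinAt
  · have hxz : (x * z) ^ γ ≤ z :=
      calc (x * z) ^ γ ≤ z ^ γ :=
            Real.rpow_le_rpow (mul_nonneg hx0.le hz.1.le) (by nlinarith [hz.1]) hγ0.le
        _ ≤ z ^ (1:ℝ) := Real.rpow_le_rpow_of_exponent_ge hz.1 hz.2.le hγ
        _ = z := Real.rpow_one z
    calc (1 - (x * z) ^ γ) ^ (-β) ≤ (1 - z) ^ (-β) :=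
          Real.rpow_le_rpow_of_nonpos (by linarith [hz.2]) (by linarith) (by linarith)
      _ ≤ z ^ (β - 1) * (1 - z) ^ (-β) :=
          le_mul_of_one_le_left (Real.rpow_nonneg (by linarith [hz.2]) _)
            (Real.one_le_rpow_of_pos_of_le_one_of_nonpos hz.1 hz.2.le (by linarith))

lemma one_le_integral_rpow_mul_one_sub_rpow (hβ0 : 0 < β) (hβ1 : β < 1) :
    1 ≤ ∫ t in (0:ℝ)..1, t ^ (β - 1) * (1 - t) ^ (-β) := by
  have h := (le_comparisonPrimitive hβ0.le one_pos (by norm_num : (0:ℝ) ≤ 1/2) (by norm_num)).trans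
    (comparisonPrimitive_le hβ0 hβ1 le_rfl (by norm_num : (0:ℝ) < 1/2) (by norm_num))
  linarith

lemma mul_sub_le_comparisonPrimitive_sub (hγ : 0 < γ) {k a t : ℝ} {x x' : ℝ → ℝ}
    (hx : ∀ σ ∈ Icc a t, HasDerivAt x (x' σ) σ) (hx01 : ∀ σ ∈ Icc a t, x σ ∈ Ioo (0:ℝ) 1)
    (hx' : ∀ σ ∈ Icc a t, k * (1 - x σ ^ γ) ^ β ≤ x' σ) (hat : a ≤ t) :
    k * (t - a) ≤ comparisonPrimitive β γ (x t) - comparisonPrimitive β γ (x a) := by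
  have hF : ∀ σ ∈ Icc a t,
      HasDerivAt (comparisonPrimitive β γ ∘ x) ((1 - x σ ^ γ) ^ (-β) * x' σ) σ :=
    fun σ hσ => (hasDerivAt_comparisonPrimitive hγ (hx01 σ hσ)).comp σ (hx σ hσ)
  refine (convex_Icc a t).mul_sub_le_image_sub_of_le_deriv
    (fun σ hσ => (hF σ hσ).continuousAt.continuousWithinAt)
    (fun σ hσ => (hF σ (interior_subset hσ)).differentiableAt.differentiableWithinAt)
    (fun σ hσ => ?_) a ⟨le_rfl, hat⟩ t ⟨hat, le_rfl⟩ hat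
  replace hσ := interior_subset hσ
  have hpos : 0 < 1 - x σ ^ γ :=
    sub_pos.2 (Real.rpow_lt_one (hx01 σ hσ).1.le (hx01 σ hσ).2 hγ)
  rw [(hF σ hσ).deriv]
  calc k = (1 - x σ ^ γ) ^ (-β) * (k * (1 - x σ ^ γ) ^ β) := by
        rw [Real.rpow_neg hpos.le]; field_simp
    _ ≤ _ := mul_le_mul_of_nonneg_left (hx' σ hσ) (by positivity)

end ComparisonPrimitive

lemma rpow_deriv_lower_bound {α β k r v : ℝ} (hα : 0 < α) (hαβ : 1 < α * β) (hr : 1 < r)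
    (hv : v ≤ -k * (r ^ α - 1) ^ β) :
    k * (α * β - 1) * (1 - (r ^ (1 - α * β)) ^ (α / (α * β - 1))) ^ β
      ≤ v * (1 - α * β) * r ^ (1 - α * β - 1) := by
  have hr0 : 0 < r := one_pos.trans hr
  have hW : 1 < r ^ α := Real.one_lt_rpow hr hα
  have hpow : (r ^ (1 - α * β)) ^ (α / (α * β - 1)) = (r ^ α)⁻¹ := by
    have : α * β - 1 ≠ 0 := by linarith
    rw [← Real.rpow_mul hr0.le, ← Real.rpow_neg hr0.le]
    congr 1
    field_simp
    ring
  have hbase : (1 - (r ^ α)⁻¹) ^ β = (r ^ α - 1) ^ β * (r ^ (α * β))⁻¹ := by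
    rw [show 1 - (r ^ α)⁻¹ = (r ^ α - 1) / r ^ α by field_simp,
      Real.div_rpow (by linarith) (by positivity), ← Real.rpow_mul hr0.le, div_eq_mul_inv]
  have hexp : r ^ (1 - α * β - 1) = (r ^ (α * β))⁻¹ := by
    rw [← Real.rpow_neg hr0.le]; ring_nf
  rw [hpow, hbase, hexp, ← mul_assoc]
  refine mul_le_mul_of_nonneg_right ?_ (by positivity)
  nlinarith

lemma div_rpow_deriv_lower_bound {α β Q c u u' : ℝ} (hα : 0 < α) (hαβ : 1 < α * β) (hc : 0 < c)
    (hcu : c < u) (hu' : u' ≤ -Q * (u ^ α - c ^ α) ^ β) :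
    Q * (α * β - 1) * c ^ (α * β - 1) * (1 - ((u / c) ^ (1 - α * β)) ^ (α / (α * β - 1))) ^ β
      ≤ u' / c * (1 - α * β) * (u / c) ^ (1 - α * β - 1) := by
  have hscaled : -(Q * c ^ (α * β - 1)) * ((u / c) ^ α - 1) ^ β = -Q * (u ^ α - c ^ α) ^ β / c := by
    have hcα : 0 < c ^ α := by positivity
    have hdiff : 0 ≤ u ^ α - c ^ α :=
      sub_nonneg.2 (Real.rpow_le_rpow hc.le hcu.le hα.le)
    rw [Real.div_rpow (by linarith) hc.le, div_sub_one hcα.ne', Real.div_rpow hdiff hcα.le,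
      ← Real.rpow_mul hc.le, Real.rpow_sub hc, Real.rpow_one]
    field_simp
  have h := rpow_deriv_lower_bound (k := Q * c ^ (α * β - 1)) (v := u' / c) hα hαβ
    ((one_lt_div hc).2 hcu) (hscaled ▸ div_le_div_of_nonneg_right hu' hc.le)
  convert h using 2
  ring

lemma le_rpow_mul_rpow_of_le_mul_rpow {s B X y : ℝ} (hs : 1 < s) (hB : 0 < B) (hy : 0 < y)
    (hX : 0 < X) (h : X ≤ B * y ^ (1 - s)) : y ≤ B ^ (1 / (s - 1)) * X ^ (1 / (1 - s)) := by
  have hne : 1 - s ≠ 0 := by linarith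
  have hroot : B ^ (1 / (1 - s)) * y ≤ X ^ (1 / (1 - s)) :=
    calc B ^ (1 / (1 - s)) * y = (B * y ^ (1 - s)) ^ (1 / (1 - s)) := by
          rw [Real.mul_rpow hB.le (by positivity), ← Real.rpow_mul hy.le,
            mul_one_div_cancel hne, Real.rpow_one]
      _ ≤ X ^ (1 / (1 - s)) :=
          Real.rpow_le_rpow_of_nonpos hX h (one_div_nonpos.2 (by linarith))
  have hcancel : B ^ (1 / (s - 1)) * B ^ (1 / (1 - s)) = 1 := by
    rw [← Real.rpow_add hB, show 1 / (s - 1) + 1 / (1 - s) = 0 by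
      rw [← neg_sub s 1, div_neg, add_neg_cancel], Real.rpow_zero]
  calc y = B ^ (1 / (s - 1)) * (B ^ (1 / (1 - s)) * y) := by rw [← mul_assoc, hcancel, one_mul]
    _ ≤ _ := mul_le_mul_of_nonneg_left hroot (by positivity)

lemma add_mul_sub_le_mul_rpow_of_mem_Ico {a b α β Q₁ : ℝ} {f f' : ℝ → ℝ} (hα : 0 < α)
    (hβ0 : 0 < β) (hβ1 : β < 1) (hαβ : 1 < α * β)
    (hderiv : ∀ τ ∈ Icc a b, HasDerivAt f (f' τ) τ) (hanti : StrictAntiOn f (Icc a b))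
    (hfb : 0 < f b) (hbound : ∀ τ ∈ Icc a b, f' τ ≤ -Q₁ * (f τ ^ α - f b ^ α) ^ β)
    {t : ℝ} (ht : t ∈ Ico a b) :
    f a ^ (1 - α * β) + Q₁ * (α * β - 1) * (t - a)
      ≤ (∫ s in (0:ℝ)..1, s ^ (β - 1) * (1 - s) ^ (-β)) * f t ^ (1 - α * β) := by
  set c := f b
  set x : ℝ → ℝ := fun σ => (f σ / c) ^ (1 - α * β)
  set k := Q₁ * (α * β - 1) * c ^ (α * β - 1)
  have hγ : 1 ≤ α / (α * β - 1) := by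
    rw [one_le_div (by linarith)]; nlinarith
  have hsub : Icc a t ⊆ Icc a b := Icc_subset_Icc_right ht.2.le
  have hc_lt : ∀ σ ∈ Icc a t, c < f σ := fun σ hσ =>
    hanti (hsub hσ) (right_mem_Icc.2 (ht.1.trans ht.2.le)) (hσ.2.trans_lt ht.2)
  have hratio : ∀ σ ∈ Icc a t, 1 < f σ / c := fun σ hσ => (one_lt_div hfb).2 (hc_lt σ hσ)
  have hx01 : ∀ σ ∈ Icc a t, x σ ∈ Ioo (0:ℝ) 1 := fun σ hσ =>
    ⟨Real.rpow_pos_of_pos (one_pos.trans (hratio σ hσ)) _,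
      Real.rpow_lt_one_of_one_lt_of_neg (hratio σ hσ) (by linarith)⟩
  have hx : ∀ σ ∈ Icc a t,
      HasDerivAt x (f' σ / c * (1 - α * β) * (f σ / c) ^ (1 - α * β - 1)) σ := fun σ hσ =>
    ((hderiv σ (hsub hσ)).div_const c).rpow_const
      (Or.inl (one_pos.trans (hratio σ hσ)).ne')
  have hgrowth := mul_sub_le_comparisonPrimitive_sub (β := β) (k := k) (by linarith) hx hx01
    (fun σ hσ => div_rpow_deriv_lower_bound hα hαβ hfb (hc_lt σ hσ) (hbound σ (hsub hσ))) ht.1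
  obtain ⟨hxa0, hxa1⟩ := hx01 a ⟨le_rfl, ht.1⟩
  obtain ⟨hxt0, hxt1⟩ := hx01 t ⟨ht.1, le_rfl⟩
  have hlow := le_comparisonPrimitive (γ := α / (α * β - 1)) hβ0.le (by linarith) hxa0.le hxa1
  have hhigh := comparisonPrimitive_le hβ0 hβ1 hγ hxt0 hxt1
  have hscale : ∀ σ ∈ Icc a t, x σ * c ^ (1 - α * β) = f σ ^ (1 - α * β) := fun σ hσ => by
    rw [← Real.mul_rpow (one_pos.trans (hratio σ hσ)).le hfb.le,
      div_mul_cancel₀ _ hfb.ne']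
  have hk : k * c ^ (1 - α * β) = Q₁ * (α * β - 1) := by
    rw [mul_assoc, ← Real.rpow_add hfb]; simp
  calc f a ^ (1 - α * β) + Q₁ * (α * β - 1) * (t - a)
      = (x a + k * (t - a)) * c ^ (1 - α * β) := by
        rw [add_mul, hscale a ⟨le_rfl, ht.1⟩, ← hk]; ring
    _ ≤ ((∫ s in (0:ℝ)..1, s ^ (β - 1) * (1 - s) ^ (-β)) * x t) * c ^ (1 - α * β) :=
        mul_le_mul_of_nonneg_right (by linarith) (by positivity)
    _ = _ := by rw [mul_assoc, hscale t ⟨ht.1, le_rfl⟩]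

lemma add_mul_sub_le_mul_rpow {a b α β Q₁ : ℝ} {f f' : ℝ → ℝ} (hab : a ≤ b) (hα : 0 < α)
    (hβ0 : 0 < β) (hβ1 : β < 1) (hαβ : 1 < α * β)
    (hderiv : ∀ τ ∈ Icc a b, HasDerivAt f (f' τ) τ) (hanti : StrictAntiOn f (Icc a b))
    (hfb : 0 < f b) (hbound : ∀ τ ∈ Icc a b, f' τ ≤ -Q₁ * (f τ ^ α - f b ^ α) ^ β)
    {τ : ℝ} (hτ : τ ∈ Icc a b) :
    f a ^ (1 - α * β) + Q₁ * (α * β - 1) * (τ - a)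
      ≤ (∫ s in (0:ℝ)..1, s ^ (β - 1) * (1 - s) ^ (-β)) * f τ ^ (1 - α * β) := by
  rcases hab.eq_or_lt with rfl | hab
  · obtain rfl : τ = a := le_antisymm hτ.2 hτ.1
    rw [sub_self, mul_zero, add_zero]
    exact le_mul_of_one_le_left (Real.rpow_nonneg hfb.le _)
      (one_le_integral_rpow_mul_one_sub_rpow hβ0 hβ1)
  · have hf : ContinuousOn f (Icc a b) := fun σ hσ =>
      (hderiv σ hσ).continuousAt.continuousWithinAt
    rw [← closure_Ico hab.ne] at hf hτ
    refine le_on_closure (fun t ht => add_mul_sub_le_mul_rpow_of_mem_Ico hα hβ0 hβ1 hαβ hderiv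
      hanti hfb hbound ht) (by fun_prop) (continuousOn_const.mul (hf.rpow_const fun σ hσ => ?_)) hτ
    rw [closure_Ico hab.ne] at hσ
    exact Or.inl (hfb.trans_le (hanti.antitoneOn hσ (right_mem_Icc.2 hab.le) hσ.2)).ne'

/-- Upper-bound half of the ODE comparison lemma: if `f' ≤ -Q₁(fᵅ - f(b)ᵅ)^β` with `αβ > 1`,
then with `Q₀ = B(β,1-β)^{1/(αβ-1)}` one has
`f(τ) ≤ Q₀ (f(a)^{1-αβ} + Q₁(αβ-1)(τ-a))^{1/(1-αβ)}`. -/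
theorem stmt5 (a b α β Q₁ : ℝ) (hab : a ≤ b)
    (hQ₁ : 0 < Q₁) (hα : 0 < α) (hβ : β ∈ Set.Ioo (0:ℝ) 1)
    (hαβ : 1 < α * β)
    (f f' : ℝ → ℝ)
    (hderiv : ∀ τ ∈ Set.Icc a b, HasDerivAt f (f' τ) τ)
    (hanti : StrictAntiOn f (Set.Icc a b))
    (hfb : 0 < f b)
    (hbound : ∀ τ ∈ Set.Icc a b, f' τ ≤ -Q₁ * ((f τ) ^ α - (f b) ^ α) ^ β) :
    ∀ τ ∈ Set.Icc a b,
      f τ ≤ (∫ t in (0:ℝ)..1, t ^ (β - 1) * (1 - t) ^ (-β)) ^ (1/(α*β - 1)) *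
        (f a ^ (1 - α*β) + Q₁ * (α*β - 1) * (τ - a)) ^ (1/(1 - α*β)) := by
  obtain ⟨hβ0, hβ1⟩ := hβ
  intro τ hτ
  have hf_ge : ∀ σ ∈ Icc a b, f b ≤ f σ := fun σ hσ =>
    hanti.antitoneOn hσ (right_mem_Icc.2 hab) hσ.2
  have hX : 0 < f a ^ (1 - α * β) + Q₁ * (α * β - 1) * (τ - a) :=
    add_pos_of_pos_of_nonneg (Real.rpow_pos_of_pos (hfb.trans_le (hf_ge a (left_mem_Icc.2 hab))) _)
      (mul_nonneg (mul_nonneg hQ₁.le (by linarith)) (by linarith [hτ.1]))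
  exact le_rpow_mul_rpow_of_le_mul_rpow hαβ
    (one_pos.trans_le (one_le_integral_rpow_mul_one_sub_rpow hβ0 hβ1))
    (hfb.trans_le (hf_ge τ hτ)) hX
    (add_mul_sub_le_mul_rpow hab hα hβ0 hβ1 hαβ hderiv hanti hfb hbound hτ)
end

section
/- Let u : [-T, 0] → ℝ solve the Riccati inequality u' ≤ -u² + K₁²T⁻² with u(t) > 0 for all t and u(t) → +∞ as t → -T⁺. Then u(0) ≤ K₁ T⁻¹ coth(K₁), where the comparison solution is ū(t) = K₁T⁻¹ coth(K₁T⁻¹(t+T)). -/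
/-!
With `a = K₁ / T`, the reciprocal `v = 1 / u` satisfies `v' ≥ 1 - a² v²`, and
`tanh (a (t + T)) / a = 1 / ū` solves the corresponding equation with value `0` at `-T`.
Comparing `v` from below with the slightly faster solutions `tanh (b (t - t₀)) / b`, `b > a`,
started at `t₀ > -T`, where they vanish while `v` is positive, and letting `b → a`, `t₀ → -T`
gives `v 0 ≥ tanh K₁ / a`.
-/

open Set Filter Topology Real

lemma Real.hasDerivAt_tanh (x : ℝ) : HasDerivAt tanh (1 - tanh x ^ 2) x := by
  have h := (hasDerivAt_sinh x).div (hasDerivAt_cosh x) (cosh_pos x).ne'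
  rw [show sinh / cosh = tanh from funext fun y => (tanh_eq_sinh_div_cosh y).symm] at h
  refine h.congr_deriv ?_
  rw [tanh_eq_sinh_div_cosh, div_pow, eq_sub_iff_add_eq, ← add_div,
    div_eq_one_iff_eq (pow_ne_zero 2 (cosh_pos x).ne')]
  ring

@[fun_prop]
lemma Real.continuous_tanh : Continuous tanh :=
  continuous_iff_continuousAt.2 fun x => (hasDerivAt_tanh x).continuousAt

lemma Real.tanh_pos {x : ℝ} (hx : 0 < x) : 0 < tanh x := by
  rw [tanh_eq_sinh_div_cosh]
  exact div_pos (sinh_pos_iff.2 hx) (cosh_pos x)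

lemma hasDerivAt_tanh_mul_sub_div {b : ℝ} (hb : b ≠ 0) (t₀ x : ℝ) :
    HasDerivAt (fun t => tanh (b * (t - t₀)) / b)
      (1 - b ^ 2 * (tanh (b * (x - t₀)) / b) ^ 2) x := by
  have h := ((hasDerivAt_tanh _).comp x (((hasDerivAt_id x).sub_const t₀).const_mul b)).div_const b
  refine h.congr_deriv ?_
  field_simp
  rfl

/-- Fencing from below: `b² > a²` makes the derivative comparison strict wherever the two
curves touch. -/
lemma tanh_mul_sub_div_le_of_deriv_ge {v v' : ℝ → ℝ} {a b t₀ t₁ : ℝ} (hab : a ^ 2 < b ^ 2)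
    (hderiv : ∀ t ∈ Icc t₀ t₁, HasDerivAt v (v' t) t)
    (hineq : ∀ t ∈ Icc t₀ t₁, 1 - a ^ 2 * v t ^ 2 ≤ v' t)
    (hpos : ∀ t ∈ Icc t₀ t₁, 0 < v t) (ht : t₀ ≤ t₁) :
    tanh (b * (t₁ - t₀)) / b ≤ v t₁ := by
  have hb : b ≠ 0 := by rintro rfl; nlinarith [sq_nonneg a]
  refine image_le_of_deriv_right_lt_deriv_boundary'
    (fun t _ => (hasDerivAt_tanh_mul_sub_div hb t₀ t).continuousAt.continuousWithinAt)
    (fun t _ => (hasDerivAt_tanh_mul_sub_div hb t₀ t).hasDerivWithinAt) ?_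
    (fun t ht => (hderiv t ht).continuousAt.continuousWithinAt)
    (fun t ht => (hderiv t (Ico_subset_Icc_self ht)).hasDerivWithinAt) ?_ ⟨ht, le_rfl⟩
  · simpa using (hpos t₀ ⟨le_rfl, ht⟩).le
  · intro t ht heq
    have ht' := Ico_subset_Icc_self ht
    have hv := hpos t ht'
    rw [heq]
    nlinarith [hineq t ht', mul_lt_mul_of_pos_right hab (pow_pos hv 2)]

lemma le_div_tanh_of_riccati {u u' : ℝ → ℝ} {a t₀ t₁ : ℝ} (ha : 0 < a) (ht : t₀ < t₁)
    (hderiv : ∀ t ∈ Ioc t₀ t₁, HasDerivAt u (u' t) t)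
    (hineq : ∀ t ∈ Ioc t₀ t₁, u' t ≤ -u t ^ 2 + a ^ 2)
    (hpos : ∀ t ∈ Ioc t₀ t₁, 0 < u t) :
    u t₁ ≤ a / tanh (a * (t₁ - t₀)) := by
  have hcomp : ∀ s ∈ Ioo 0 (t₁ - t₀),
      tanh ((a + s) * (t₁ - (t₀ + s))) / (a + s) ≤ (u t₁)⁻¹ := by
    intro s hs
    have hsub : Icc (t₀ + s) t₁ ⊆ Ioc t₀ t₁ := fun t h => ⟨by linarith [h.1, hs.1], h.2⟩
    refine tanh_mul_sub_div_le_of_deriv_ge (a := a) (b := a + s) (by nlinarith [hs.1])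
      (fun t h => (hderiv t (hsub h)).inv (hpos t (hsub h)).ne') (fun t h => ?_)
      (fun t h => inv_pos.2 (hpos t (hsub h))) (by linarith [hs.2])
    have hu := hpos t (hsub h)
    have key : (1 - a ^ 2 * (u t)⁻¹ ^ 2) * u t ^ 2 = u t ^ 2 - a ^ 2 := by field_simp
    rw [Pi.inv_apply, le_div_iff₀ (by positivity), key]
    linarith [hineq t (hsub h)]
  have hlim : Tendsto (fun s => tanh ((a + s) * (t₁ - (t₀ + s))) / (a + s)) (𝓝[>] 0)
      (𝓝 (tanh (a * (t₁ - t₀)) / a)) := by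
    have : ContinuousAt (fun s => tanh ((a + s) * (t₁ - (t₀ + s))) / (a + s)) 0 := by
      fun_prop (disch := simp [ha.ne'])
    simpa using this.tendsto.mono_left nhdsWithin_le_nhds
  have hinv : tanh (a * (t₁ - t₀)) / a ≤ (u t₁)⁻¹ :=
    le_of_tendsto hlim (Filter.mem_of_superset (Ioo_mem_nhdsGT (sub_pos.2 ht)) hcomp)
  simpa using inv_anti₀ (div_pos (tanh_pos (mul_pos ha (sub_pos.2 ht))) ha) hinv

theorem stmt7_general (T K₁ : ℝ) (hT : 0 < T) (hK : 0 < K₁)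
    (u u' : ℝ → ℝ)
    (hderiv : ∀ t ∈ Set.Ioc (-T) 0, HasDerivAt u (u' t) t)
    (hineq : ∀ t ∈ Set.Ioc (-T) 0, u' t ≤ -(u t)^2 + K₁^2 / T^2)
    (hpos : ∀ t ∈ Set.Ioc (-T) 0, 0 < u t) :
    u 0 ≤ K₁ / T * (Real.cosh K₁ / Real.sinh K₁) := by
  have h := le_div_tanh_of_riccati (div_pos hK hT) (neg_lt_zero.2 hT) hderiv
    (by simpa only [div_pow] using hineq) hpos
  rwa [sub_neg_eq_add, zero_add, div_mul_cancel₀ K₁ hT.ne', tanh_eq_sinh_div_cosh,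
    div_div_eq_mul_div, mul_div_assoc] at h

/-- Riccati comparison from above: `u' ≤ -u² + K₁²T⁻²` with `u > 0` and `u → +∞` at `-T⁺`
forces `u(0) ≤ K₁ T⁻¹ coth K₁`. -/
theorem stmt7 (T K₁ : ℝ) (hT : 0 < T) (hK : 0 < K₁)
    (u u' : ℝ → ℝ)
    (hderiv : ∀ t ∈ Set.Ioc (-T) 0, HasDerivAt u (u' t) t)
    (hineq : ∀ t ∈ Set.Ioc (-T) 0, u' t ≤ -(u t)^2 + K₁^2 / T^2)
    (hpos : ∀ t ∈ Set.Ioc (-T) 0, 0 < u t)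
    (hblow : Filter.Tendsto u (nhdsWithin (-T) (Set.Ioi (-T))) Filter.atTop) :
    u 0 ≤ K₁ / T * (Real.cosh K₁ / Real.sinh K₁) :=
  stmt7_general T K₁ hT hK u u' hderiv hineq hpos
end

section
/- Let x : [0,T] → ℝ be C², positive, decreasing, and satisfy 0 ≤ x'' ≤ C₀ x^{m+1} on [0,T] for constants C₀ > 0, m > 0, with x(0) = R > 0, x'(0) ≤ 0, and x'(τ)² ≤ (2C₀/(m+2)) x(τ)^{m+2} for all τ ∈ [0,T]. Then x(τ) ≥ (R^{-m/2} + √(2C₀/(m+2)) · (m/2) · τ)^{-2/m} for all τ ∈ [0,T]. -/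
/-- Quantitative lower bound: a positive decreasing convex `x` with `x(0) = R` and
`x'(τ)² ≤ (2C₀/(m+2)) x(τ)^{m+2}` satisfies
`x(τ) ≥ (R^{-m/2} + √(2C₀/(m+2))·(m/2)·τ)^{-2/m}`. -/
theorem stmt13 (T R C₀ m : ℝ) (hT : 0 ≤ T) (hR : 0 < R) (hC : 0 < C₀) (hm : 0 < m)
    (x x' x'' : ℝ → ℝ)
    (hd1 : ∀ τ ∈ Set.Icc 0 T, HasDerivAt x (x' τ) τ)
    (hd2 : ∀ τ ∈ Set.Icc 0 T, HasDerivAt x' (x'' τ) τ)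
    (hpos : ∀ τ ∈ Set.Icc 0 T, 0 < x τ)
    (hdec : ∀ τ ∈ Set.Icc 0 T, x' τ ≤ 0)
    (hconv : ∀ τ ∈ Set.Icc 0 T, 0 ≤ x'' τ ∧ x'' τ ≤ C₀ * x τ ^ (m+1))
    (hx0 : x 0 = R)
    (hd0 : ∀ τ ∈ Set.Icc 0 T, (x' τ)^2 ≤ 2*C₀/(m+2) * x τ ^ (m+2)) :
    ∀ τ ∈ Set.Icc 0 T,
      (R ^ (-(m/2)) + Real.sqrt (2*C₀/(m+2)) * (m/2) * τ) ^ (-(2/m)) ≤ x τ := by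
  intro τ hτ
  have hm2 : (0:ℝ) < m + 2 := by linarith
  set K : ℝ := 2*C₀/(m+2) with hKdef
  have hK : 0 < K := by positivity
  set L : ℝ := Real.sqrt K * (m/2) with hLdef
  have hL0 : 0 ≤ L := by positivity
  set c : ℝ := -(m/2) with hcdef
  -- derivative of g = x ^ c
  have hderiv : ∀ t ∈ Set.Icc 0 T,
      HasDerivWithinAt (fun s => x s ^ c) (x' t * c * x t ^ (c-1)) (Set.Icc 0 T) t :=
    fun t ht => ((hd1 t ht).rpow_const (Or.inl (ne_of_gt (hpos t ht)))).hasDerivWithinAt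
  have hbound : ∀ t ∈ Set.Icc 0 T, ‖x' t * c * x t ^ (c-1)‖ ≤ L := by
    intro t ht
    have hx := hpos t ht
    have hx' := hdec t ht
    have hsq := hd0 t ht
    have hb : (0:ℝ) ≤ Real.sqrt K * x t ^ ((m+2)/2) := by positivity
    have hsq2 : (Real.sqrt K * x t ^ ((m+2)/2))^2 = K * x t ^ (m+2) := by
      rw [mul_pow, Real.sq_sqrt hK.le, ← Real.rpow_natCast (x t ^ ((m+2)/2)) 2,
        ← Real.rpow_mul hx.le]
      norm_num
    have h1 : -x' t ≤ Real.sqrt K * x t ^ ((m+2)/2) := by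
      nlinarith [hsq, hsq2, hb, hx']
    have hxpow : x t ^ (c-1) * x t ^ ((m+2)/2) = 1 := by
      rw [← Real.rpow_add hx]
      have : c - 1 + (m+2)/2 = 0 := by rw [hcdef]; ring
      rw [this, Real.rpow_zero]
    have hxc1 : 0 < x t ^ (c-1) := Real.rpow_pos_of_pos hx _
    have hg1 : 0 ≤ x' t * c * x t ^ (c-1) := by
      have heq : x' t * c * x t ^ (c-1) = (-x' t) * (m/2) * (x t ^ (c-1)) := by
        rw [hcdef]; ring
      rw [heq]
      exact mul_nonneg (mul_nonneg (by linarith) (by positivity)) hxc1.le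
    have hg2 : x' t * c * x t ^ (c-1) ≤ L := by
      have h2 : (m/2) * (x t ^ (c-1)) * (-x' t)
          ≤ (m/2) * (x t ^ (c-1)) * (Real.sqrt K * x t ^ ((m+2)/2)) := by
        apply mul_le_mul_of_nonneg_left h1 (by positivity)
      calc x' t * c * x t ^ (c-1) = (m/2) * (x t ^ (c-1)) * (-x' t) := by rw [hcdef]; ring
        _ ≤ (m/2) * (x t ^ (c-1)) * (Real.sqrt K * x t ^ ((m+2)/2)) := h2
        _ = L * (x t ^ (c-1) * x t ^ ((m+2)/2)) := by rw [hLdef]; ring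
        _ = L := by rw [hxpow, mul_one]
    rw [Real.norm_eq_abs, abs_le]
    exact ⟨by linarith, hg2⟩
  have h0mem : (0:ℝ) ∈ Set.Icc 0 T := Set.left_mem_Icc.2 hT
  have hmvt := (convex_Icc (0:ℝ) T).norm_image_sub_le_of_norm_hasDerivWithin_le
    hderiv hbound h0mem hτ
  have hτ0 : 0 ≤ τ := hτ.1
  have hmvt' : x τ ^ c - x 0 ^ c ≤ L * τ := by
    have : ‖x τ ^ c - x 0 ^ c‖ ≤ L * ‖τ - (0:ℝ)‖ := hmvt
    rw [Real.norm_eq_abs, Real.norm_eq_abs, sub_zero, abs_of_nonneg hτ0] at this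
    exact (le_abs_self _).trans this
  have hgB : x τ ^ c ≤ R ^ c + L * τ := by
    rw [hx0] at hmvt'; linarith
  have hxτ : 0 < x τ := hpos τ hτ
  have hgpos : 0 < x τ ^ c := Real.rpow_pos_of_pos hxτ _
  have hfin : (R ^ c + L * τ) ^ (-(2/m)) ≤ (x τ ^ c) ^ (-(2/m)) :=
    Real.rpow_le_rpow_of_nonpos hgpos hgB (neg_nonpos.2 (by positivity))
  have hinv : (x τ ^ c) ^ (-(2/m)) = x τ := by
    rw [← Real.rpow_mul hxτ.le]
    have : c * -(2/m) = 1 := by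
      rw [hcdef]; field_simp
    rw [this, Real.rpow_one]
  rw [hinv] at hfin
  have hform : R ^ c + L * τ
      = R ^ (-(m/2)) + Real.sqrt (2*C₀/(m+2)) * (m/2) * τ := by
    rw [hcdef, hLdef, hKdef]
  rw [hform] at hfin
  exact hfin
end

section
/- For a warped product g = dx² + f(x)²g₀ with f(0)=1, f'(0)=0, the following are equivalent (with possibly different constants): (1) -C₁|x|^m ≤ K_⊥(v) ≤ -C₂|x|^m for all v ⊥ X with |x_v| < ε; (2) -C₁|x|^m ≤ Ric(v) ≤ -C₂|x|^m for all v with |x_v| < ε; (3) C₁|x|^{m+2} ≤ f(x) - 1 ≤ C₂|x|^{m+2} for |x| < ε. -/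
open Filter Topology Set
open scoped ContDiff

/-- If the first `M` derivatives of a smooth function vanish at `0`, then
`g x / x ^ M` tends to `iteratedDeriv M g 0 / M!` as `x → 0` (punctured). -/
lemma key_tendsto : ∀ (M : ℕ) (g : ℝ → ℝ), ContDiff ℝ ∞ g →
    (∀ i, i < M → iteratedDeriv i g 0 = 0) →
    Tendsto (fun x => g x / x ^ M) (𝓝[≠] (0:ℝ))
      (𝓝 (iteratedDeriv M g 0 / (M.factorial : ℝ)))
  | 0, g, hg, _ => by
      simpa using ((hg.continuous.tendsto 0).mono_left nhdsWithin_le_nhds)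
  | (M+1), g, hg, hd => by
      have hg' : ContDiff ℝ ∞ (deriv g) := (contDiff_infty_iff_deriv.mp hg).2
      have hd' : ∀ i, i < M → iteratedDeriv i (deriv g) 0 = 0 := by
        intro i hi
        have := hd (i+1) (by omega)
        rwa [iteratedDeriv_succ'] at this
      have IH := key_tendsto M (deriv g) hg' hd'
      have htop : iteratedDeriv M (deriv g) 0 = iteratedDeriv (M+1) g 0 := by
        rw [iteratedDeriv_succ']
      have hval : iteratedDeriv (M+1) g 0 / ((M+1).factorial : ℝ)
          = iteratedDeriv M (deriv g) 0 / (M.factorial : ℝ) / ((M:ℝ)+1) := by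
        rw [htop, Nat.factorial_succ, div_div]
        push_cast
        ring_nf
      have hdiv : Tendsto (fun x => deriv g x / deriv (fun y : ℝ => y ^ (M+1)) x)
          (𝓝[≠] (0:ℝ)) (𝓝 (iteratedDeriv (M+1) g 0 / ((M+1).factorial : ℝ))) := by
        rw [hval]
        have h1 := IH.div_const ((M:ℝ)+1)
        refine h1.congr' ?_
        filter_upwards with x
        rw [deriv_pow_field, Nat.add_sub_cancel, div_mul_eq_div_div_swap]
        push_cast
        ring
      apply deriv.lhopital_zero_nhdsNE
      · filter_upwards with x
        exact (hg.differentiable (by norm_num)).differentiableAt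
      · filter_upwards [self_mem_nhdsWithin] with x hx
        rw [deriv_pow_field]
        exact mul_ne_zero (by positivity) (pow_ne_zero _ hx)
      · have hg0 : g 0 = 0 := by
          have := hd 0 (by omega); simpa using this
        have := (hg.continuous.tendsto 0).mono_left (nhdsWithin_le_nhds (s := {(0:ℝ)}ᶜ))
        rwa [hg0] at this
      · have := ((continuous_pow (M+1)).tendsto (0:ℝ)).mono_left
          (nhdsWithin_le_nhds (s := {(0:ℝ)}ᶜ))
        simpa using this
      · exact hdiv

lemma rpow_tendsto_zero {q : ℝ} (hq : 0 < q) :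
    Tendsto (fun x : ℝ => x ^ q) (𝓝[>] (0:ℝ)) (𝓝 0) := by
  have h := (Real.continuousAt_rpow_const 0 q (Or.inr hq.le)).tendsto
  rw [Real.zero_rpow hq.ne'] at h
  exact h.mono_left nhdsWithin_le_nhds

/-- Forward direction: a two-sided sandwich `c|x|^p ≤ g x ≤ C|x|^p` near `0` for a smooth `g`
forces `p` to be an even natural number `2k`, the first `2k` derivatives to vanish and the
`2k`-th derivative to be positive. -/
lemma sandwich_to_taylor (g : ℝ → ℝ) (hg : ContDiff ℝ ∞ g) (p : ℝ) (hp : 0 < p)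
    (c C ε : ℝ) (hc : 0 < c) (hε : 0 < ε)
    (h : ∀ x : ℝ, |x| < ε → c * |x| ^ p ≤ g x ∧ g x ≤ C * |x| ^ p) :
    ∃ k : ℕ, p = ((2*k : ℕ) : ℝ) ∧ (∀ i, i < 2*k → iteratedDeriv i g 0 = 0) ∧
      0 < iteratedDeriv (2*k) g 0 := by
  -- positivity of g near 0 off 0
  have hgpos : ∀ x : ℝ, x ≠ 0 → |x| < ε → 0 < g x := by
    intro x hx hxε
    have h1 := (h x hxε).1
    have : 0 < c * |x| ^ p := by
      have : (0:ℝ) < |x| ^ p := Real.rpow_pos_of_pos (abs_pos.mpr hx) p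
      positivity
    linarith
  by_cases hfl : ∀ i, iteratedDeriv i g 0 = 0
  · exfalso
    set N : ℕ := ⌈p⌉₊ + 1 with hN
    have hpN : p < (N:ℝ) := by
      have := Nat.le_ceil p
      push_cast [hN]
      linarith
    have ht := key_tendsto N g hg (fun i _ => hfl i)
    rw [hfl N, zero_div] at ht
    have ht' : Tendsto (fun x => g x / x ^ N) (𝓝[>] (0:ℝ)) (𝓝 0) :=
      ht.mono_left (nhdsWithin_mono _ (fun x hx => ne_of_gt hx))
    have ev1 : ∀ᶠ x in 𝓝[>] (0:ℝ), g x / x ^ N < c :=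
      ht'.eventually_lt_const hc
    have ev2 : ∀ᶠ x in 𝓝[>] (0:ℝ), c ≤ g x / x ^ N := by
      filter_upwards [Ioo_mem_nhdsGT (show (0:ℝ) < min ε 1 by positivity)]
        with x hx
      obtain ⟨hx0, hx1⟩ := hx
      have hxε : |x| < ε := by
        rw [abs_of_pos hx0]; exact hx1.trans_le (min_le_left _ _)
      have hx1' : x ≤ 1 := (hx1.trans_le (min_le_right _ _)).le
      have hxn : (0:ℝ) < x ^ N := pow_pos hx0 N
      rw [le_div_iff₀ hxn]
      have h1 := (h x hxε).1
      rw [abs_of_pos hx0] at h1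
      -- c * x^N ≤ c * x^p ≤ g x
      have hxx : x ^ (N:ℝ) ≤ x ^ p := by
        apply Real.rpow_le_rpow_of_exponent_ge hx0 hx1' hpN.le
      have hxN : x ^ (N:ℕ) = x ^ ((N:ℕ):ℝ) := (Real.rpow_natCast x N).symm
      nlinarith [hxx, hxN, hc]
    obtain ⟨x, hx1, hx2⟩ := (ev1.and ev2).exists
    linarith
  · push_neg at hfl
    have hex : ∃ i, iteratedDeriv i g 0 ≠ 0 := hfl
    set M := Nat.find hex with hM
    have ha : iteratedDeriv M g 0 ≠ 0 := Nat.find_spec hex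
    have hlt : ∀ i, i < M → iteratedDeriv i g 0 = 0 := by
      intro i hi
      by_contra hne
      exact absurd hi (not_lt.mpr (Nat.find_le hne))
    set L := iteratedDeriv M g 0 / (M.factorial : ℝ) with hLdef
    have ht := key_tendsto M g hg hlt
    have hL0 : L ≠ 0 := div_ne_zero ha (Nat.cast_ne_zero.mpr (Nat.factorial_ne_zero M))
    have htr : Tendsto (fun x => g x / x ^ M) (𝓝[>] (0:ℝ)) (𝓝 L) :=
      ht.mono_left (nhdsWithin_mono _ (fun x hx => ne_of_gt hx))
    have htl : Tendsto (fun x => g x / x ^ M) (𝓝[<] (0:ℝ)) (𝓝 L) :=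
      ht.mono_left (nhdsWithin_mono _ (fun x hx => ne_of_lt hx))
    -- L > 0
    have hLpos : 0 < L := by
      rcases lt_or_gt_of_ne hL0 with hneg | hpos
      · exfalso
        have ev1 : ∀ᶠ x in 𝓝[>] (0:ℝ), g x / x ^ M < L/2 :=
          htr.eventually_lt_const (by linarith)
        have ev2 : ∀ᶠ x in 𝓝[>] (0:ℝ), 0 ≤ g x / x ^ M := by
          filter_upwards [Ioo_mem_nhdsGT hε] with x hx
          have hgx := hgpos x (ne_of_gt hx.1) (by rw [abs_of_pos hx.1]; exact hx.2)
          exact div_nonneg hgx.le (pow_nonneg hx.1.le M)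
        obtain ⟨x, h1, h2⟩ := (ev1.and ev2).exists
        linarith
      · exact hpos
    -- M even
    have hMeven : Even M := by
      by_contra hodd
      rw [Nat.not_even_iff_odd] at hodd
      have ev1 : ∀ᶠ x in 𝓝[<] (0:ℝ), L/2 < g x / x ^ M :=
        htl.eventually_const_lt (by linarith)
      have ev2 : ∀ᶠ x in 𝓝[<] (0:ℝ), g x / x ^ M < 0 := by
        filter_upwards [Ioo_mem_nhdsLT (show -ε < (0:ℝ) by linarith)] with x hx
        have hxε : |x| < ε := by rw [abs_of_neg hx.2]; linarith [hx.1]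
        have hg1 := hgpos x (ne_of_lt hx.2) hxε
        have hxM : x ^ M < 0 := hodd.pow_neg hx.2
        exact div_neg_of_pos_of_neg hg1 hxM
      obtain ⟨x, h1, h2⟩ := (ev1.and ev2).exists
      linarith
    -- p = M
    have hpM : p = (M:ℝ) := by
      rcases lt_trichotomy p (M:ℝ) with hlt' | heq | hgt
      · exfalso
        have ev1 : ∀ᶠ x in 𝓝[>] (0:ℝ), g x / x ^ M < 2*L :=
          htr.eventually_lt_const (by linarith)
        have ev3 : Tendsto (fun x : ℝ => 2*L * x ^ ((M:ℝ) - p)) (𝓝[>] (0:ℝ)) (𝓝 0) := by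
          have := (rpow_tendsto_zero (show (0:ℝ) < (M:ℝ) - p by linarith)).const_mul (2*L)
          simpa using this
        have ev4 : ∀ᶠ x in 𝓝[>] (0:ℝ), 2*L * x ^ ((M:ℝ) - p) < c :=
          ev3.eventually_lt_const hc
        have ev2 : ∀ᶠ x in 𝓝[>] (0:ℝ), c ≤ 2*L * x ^ ((M:ℝ) - p) := by
          filter_upwards [Ioo_mem_nhdsGT hε, ev1] with x hx hx1
          have hx0 := hx.1
          have hxε : |x| < ε := by rw [abs_of_pos hx0]; exact hx.2
          have h1 := (h x hxε).1
          rw [abs_of_pos hx0] at h1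
          have hxM : (0:ℝ) < x ^ M := pow_pos hx0 M
          have hgx : g x < 2*L * x ^ M := by
            rw [div_lt_iff₀ hxM] at hx1; linarith
          -- c * x^p < 2L * x^M = 2L * x^p * x^(M-p)
          have hsplit : x ^ (M:ℝ) = x ^ p * x ^ ((M:ℝ) - p) := by
            rw [← Real.rpow_add hx0]; ring_nf
          have hxM' : x ^ (M:ℕ) = x ^ ((M:ℕ):ℝ) := (Real.rpow_natCast x M).symm
          have hxp : (0:ℝ) < x ^ p := Real.rpow_pos_of_pos hx0 p
          rw [hxM'] at hgx
          rw [hsplit] at hgx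
          have h5 : c * x ^ p < (2*L * x ^ ((M:ℝ) - p)) * x ^ p := by nlinarith [h1, hgx]
          exact ((mul_lt_mul_iff_of_pos_right hxp).mp h5).le
        obtain ⟨x, h1, h2⟩ := (ev4.and ev2).exists
        linarith
      · exact heq
      · exfalso
        have ev1 : ∀ᶠ x in 𝓝[>] (0:ℝ), L/2 < g x / x ^ M :=
          htr.eventually_const_lt (by linarith)
        have ev3 : Tendsto (fun x : ℝ => C * x ^ (p - (M:ℝ))) (𝓝[>] (0:ℝ)) (𝓝 0) := by
          have := (rpow_tendsto_zero (show (0:ℝ) < p - (M:ℝ) by linarith)).const_mul C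
          simpa using this
        have ev4 : ∀ᶠ x in 𝓝[>] (0:ℝ), C * x ^ (p - (M:ℝ)) < L/2 :=
          ev3.eventually_lt_const (by linarith)
        have ev2 : ∀ᶠ x in 𝓝[>] (0:ℝ), L/2 ≤ C * x ^ (p - (M:ℝ)) := by
          filter_upwards [Ioo_mem_nhdsGT hε, ev1] with x hx hx1
          have hx0 := hx.1
          have hxε : |x| < ε := by rw [abs_of_pos hx0]; exact hx.2
          have h2 := (h x hxε).2
          rw [abs_of_pos hx0] at h2
          have hxM : (0:ℝ) < x ^ M := pow_pos hx0 M
          have hgx : L/2 * x ^ M < g x := by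
            rw [lt_div_iff₀ hxM] at hx1; linarith
          have hsplit : x ^ p = x ^ ((M:ℝ)) * x ^ (p - (M:ℝ)) := by
            rw [← Real.rpow_add hx0]; ring_nf
          have hxM' : x ^ (M:ℕ) = x ^ ((M:ℕ):ℝ) := (Real.rpow_natCast x M).symm
          have hxMp : (0:ℝ) < x ^ ((M:ℝ)) := Real.rpow_pos_of_pos hx0 _
          rw [hxM'] at hgx
          rw [hsplit] at h2
          have h5 : (L/2) * x ^ ((M:ℝ)) < (C * x ^ (p - (M:ℝ))) * x ^ ((M:ℝ)) := by
            nlinarith [hgx, h2]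
          exact ((mul_lt_mul_iff_of_pos_right hxMp).mp h5).le
        obtain ⟨x, h1, h2⟩ := (ev4.and ev2).exists
        linarith
    obtain ⟨k, hk⟩ := hMeven
    have hM2k : M = 2*k := by omega
    refine ⟨k, ?_, ?_, ?_⟩
    · rw [hpM, hM2k]
    · intro i hi; exact hlt i (by omega)
    · rw [← hM2k]
      by_contra hle
      push_neg at hle
      have : L ≤ 0 := div_nonpos_of_nonpos_of_nonneg hle (by positivity)
      linarith

/-- Backward direction: vanishing derivatives up to `2k` and positive `2k`-th derivative give a
two-sided sandwich `c|x|^{2k} ≤ g x ≤ C|x|^{2k}` near `0`. -/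
lemma taylor_to_sandwich (g : ℝ → ℝ) (hg : ContDiff ℝ ∞ g) (k : ℕ) (hk : 0 < k)
    (hd : ∀ i, i < 2*k → iteratedDeriv i g 0 = 0) (hpos : 0 < iteratedDeriv (2*k) g 0) :
    ∃ c C ε : ℝ, 0 < c ∧ c ≤ C ∧ 0 < ε ∧
      ∀ x : ℝ, |x| < ε → c * |x| ^ ((2*k : ℕ) : ℝ) ≤ g x ∧ g x ≤ C * |x| ^ ((2*k : ℕ) : ℝ) := by
  set M := 2*k with hMdef
  set L := iteratedDeriv M g 0 / (M.factorial : ℝ) with hLdef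
  have hL : 0 < L := div_pos hpos (by positivity)
  have ht := key_tendsto M g hg hd
  have ev1 : ∀ᶠ x in 𝓝[≠] (0:ℝ), L/2 < g x / x ^ M := ht.eventually_const_lt (by linarith)
  have ev2 : ∀ᶠ x in 𝓝[≠] (0:ℝ), g x / x ^ M < 3*L/2 := ht.eventually_lt_const (by linarith)
  have hb := ev1.and ev2
  rw [eventually_nhdsWithin_iff, Metric.eventually_nhds_iff] at hb
  obtain ⟨δ, hδ, hball⟩ := hb
  refine ⟨L/2, 3*L/2, δ, by linarith, by linarith, hδ, ?_⟩
  intro x hx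
  have hMpos : 0 < M := by omega
  by_cases hx0 : x = 0
  · subst hx0
    have hg0 : g 0 = 0 := by have := hd 0 hMpos; simpa using this
    rw [hg0]
    rw [abs_zero, Real.zero_rpow (by positivity : ((M:ℕ):ℝ) ≠ 0)]
    norm_num
  · have hP := hball (by rw [Real.dist_eq, sub_zero]; exact hx) hx0
    obtain ⟨h1, h2⟩ := hP
    have heven : Even M := ⟨k, by omega⟩
    have hxw : x ^ M = |x| ^ M := (heven.pow_abs x).symm
    have hw : (0:ℝ) < |x| ^ M := pow_pos (abs_pos.mpr hx0) M
    have hrw : |x| ^ ((M:ℕ):ℝ) = |x| ^ M := Real.rpow_natCast _ _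
    rw [hxw] at h1 h2
    rw [lt_div_iff₀ hw] at h1
    rw [div_lt_iff₀ hw] at h2
    rw [hrw]
    constructor <;> linarith

set_option maxHeartbeats 1000000 in
/-- For a warped product `g = dx² + f(x)²g₀` with `f(0)=1`, `f'(0)=0`, the following are
equivalent (with possibly different constants): (1) `K_⊥ ≈ -|x|^m`, (2) `Ric ≈ -|x|^m`,
(3) `f - 1 ≈ |x|^{m+2}`, where `K_⊥(x) = -f''(x)/f(x)` and
`Ric(x,θ) = -f''/f + (n-2)(-(f''/f)cos²θ - (f'/f)²sin²θ)`. -/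
theorem stmt16 (n : ℕ) (hn : 2 ≤ n) (m : ℝ) (hm : 0 < m)
    (f : ℝ → ℝ) (hf : ContDiff ℝ (⊤ : ℕ∞) f) (hf0 : f 0 = 1) (hf'0 : deriv f 0 = 0)
    (Kperp : ℝ → ℝ) (Ric : ℝ → ℝ → ℝ)
    (hK : ∀ x, Kperp x = -(deriv (deriv f) x) / f x)
    (hRic : ∀ x θ, Ric x θ =
      -(deriv (deriv f) x) / f x +
      ((n:ℝ) - 2) * (-(deriv (deriv f) x / f x) * Real.cos θ ^ 2
        - (deriv f x / f x)^2 * Real.sin θ ^ 2)) :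
    ((∃ C₁ C₂ ε : ℝ, 0 < C₂ ∧ C₂ ≤ C₁ ∧ 0 < ε ∧
        ∀ x : ℝ, |x| < ε → -C₁ * |x| ^ m ≤ Kperp x ∧ Kperp x ≤ -C₂ * |x| ^ m) ↔
     (∃ C₁ C₂ ε : ℝ, 0 < C₂ ∧ C₂ ≤ C₁ ∧ 0 < ε ∧
        ∀ x θ : ℝ, |x| < ε → -C₁ * |x| ^ m ≤ Ric x θ ∧ Ric x θ ≤ -C₂ * |x| ^ m)) ∧
    ((∃ C₁ C₂ ε : ℝ, 0 < C₂ ∧ C₂ ≤ C₁ ∧ 0 < ε ∧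
        ∀ x θ : ℝ, |x| < ε → -C₁ * |x| ^ m ≤ Ric x θ ∧ Ric x θ ≤ -C₂ * |x| ^ m) ↔
     (∃ C₁ C₂ ε : ℝ, 0 < C₂ ∧ C₂ ≤ C₁ ∧ 0 < ε ∧
        ∀ x : ℝ, |x| < ε → C₂ * |x| ^ (m+2) ≤ f x - 1 ∧ f x - 1 ≤ C₁ * |x| ^ (m+2))) := by
  have hfS : ContDiff ℝ ∞ f := hf.of_le (by simp)
  have hF1 : ContDiff ℝ ∞ (deriv f) := (contDiff_infty_iff_deriv.mp hfS).2
  have hF2 : ContDiff ℝ ∞ (deriv (deriv f)) := (contDiff_infty_iff_deriv.mp hF1).2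
  -- f is close to 1 near 0
  obtain ⟨δ₀, hδ₀, hfnear⟩ : ∃ δ₀ > 0, ∀ x : ℝ, |x| < δ₀ → 1/2 < f x ∧ f x < 3/2 := by
    have hc : ContinuousAt f 0 := hfS.continuous.continuousAt
    rw [Metric.continuousAt_iff] at hc
    obtain ⟨δ, hδ, hball⟩ := hc (1/2) (by norm_num)
    refine ⟨δ, hδ, fun x hx => ?_⟩
    have h := hball (show dist x 0 < δ by rw [Real.dist_eq, sub_zero]; exact hx)
    rw [Real.dist_eq, hf0] at h
    rw [abs_lt] at h
    constructor <;> linarith [h.1, h.2]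
  -- the auxiliary function f - 1
  set g1 : ℝ → ℝ := fun x => f x - 1 with hg1def
  have hg1 : ContDiff ℝ ∞ g1 := hfS.sub contDiff_const
  have hderiv_g1 : deriv g1 = deriv f := funext fun x => deriv_sub_const 1
  have hshift : ∀ i : ℕ, iteratedDeriv (i+2) g1 = iteratedDeriv i (deriv (deriv f)) := by
    intro i
    rw [show i+2 = (i+1)+1 from rfl, iteratedDeriv_succ', hderiv_g1, iteratedDeriv_succ']
  -- the key structural condition
  set Star : Prop := (∃ k : ℕ, 0 < k ∧ m = ((2*k : ℕ) : ℝ) ∧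
      (∀ i, i < 2*k → iteratedDeriv i (deriv (deriv f)) 0 = 0) ∧
      0 < iteratedDeriv (2*k) (deriv (deriv f)) 0) with hStardef
  -- (1) → Star
  have h1S : (∃ C₁ C₂ ε : ℝ, 0 < C₂ ∧ C₂ ≤ C₁ ∧ 0 < ε ∧
      ∀ x : ℝ, |x| < ε → -C₁ * |x| ^ m ≤ Kperp x ∧ Kperp x ≤ -C₂ * |x| ^ m) → Star := by
    rintro ⟨C₁, C₂, ε, hC₂, hC₁₂, hε, hb⟩
    have hC₁ : 0 < C₁ := lt_of_lt_of_le hC₂ hC₁₂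
    have hsand : ∀ x : ℝ, |x| < min ε δ₀ →
        C₂/2 * |x| ^ m ≤ deriv (deriv f) x ∧ deriv (deriv f) x ≤ 2*C₁ * |x| ^ m := by
      intro x hx
      have hxε : |x| < ε := lt_of_lt_of_le hx (min_le_left _ _)
      have hxδ : |x| < δ₀ := lt_of_lt_of_le hx (min_le_right _ _)
      obtain ⟨hfl, hfu⟩ := hfnear x hxδ
      have hfx : (0:ℝ) < f x := by linarith
      obtain ⟨hb1, hb2⟩ := hb x hxε
      rw [hK x, neg_div] at hb1 hb2
      have hw : (0:ℝ) ≤ |x| ^ m := Real.rpow_nonneg (abs_nonneg x) m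
      have hr1 : C₂ * |x| ^ m ≤ deriv (deriv f) x / f x := by linarith
      have hr2 : deriv (deriv f) x / f x ≤ C₁ * |x| ^ m := by linarith
      rw [le_div_iff₀ hfx] at hr1
      rw [div_le_iff₀ hfx] at hr2
      have hC₁ : (0:ℝ) < C₁ := lt_of_lt_of_le hC₂ hC₁₂
      constructor
      · nlinarith [mul_nonneg (mul_nonneg hC₂.le hw) (show (0:ℝ) ≤ f x - 1/2 by linarith)]
      · nlinarith [mul_nonneg (mul_nonneg hC₁.le hw) (show (0:ℝ) ≤ 3/2 - f x by linarith)]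
    obtain ⟨k, hmk, hder, hpos⟩ := sandwich_to_taylor (deriv (deriv f)) hF2 m hm
      (C₂/2) (2*C₁) (min ε δ₀) (by linarith) (lt_min hε hδ₀) hsand
    have hk : 0 < k := by
      rcases Nat.eq_zero_or_pos k with h | h
      · exfalso; rw [h] at hmk; norm_num at hmk; linarith
      · exact h
    exact ⟨k, hk, hmk, hder, hpos⟩
  -- Star → (3)
  have hS3 : Star → (∃ C₁ C₂ ε : ℝ, 0 < C₂ ∧ C₂ ≤ C₁ ∧ 0 < ε ∧
      ∀ x : ℝ, |x| < ε → C₂ * |x| ^ (m+2) ≤ f x - 1 ∧ f x - 1 ≤ C₁ * |x| ^ (m+2)) := by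
    rintro ⟨k, hk, hmk, hder, hpos⟩
    have hQ : ∀ i, i < 2*(k+1) → iteratedDeriv i g1 0 = 0 := by
      intro i hi
      match i with
      | 0 => simp [hg1def, hf0]
      | 1 =>
        rw [iteratedDeriv_one, hderiv_g1]
        exact hf'0
      | (j+2) =>
        rw [hshift j]
        exact hder j (by omega)
    have hpos' : 0 < iteratedDeriv (2*(k+1)) g1 0 := by
      rw [show 2*(k+1) = (2*k)+2 by ring, hshift]
      exact hpos
    obtain ⟨c, C, ε, hc, hcC, hε, hsand⟩ := taylor_to_sandwich g1 hg1 (k+1) (by omega) hQ hpos'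
    refine ⟨C, c, ε, hc, hcC, hε, fun x hx => ?_⟩
    have hexp : m + 2 = ((2*(k+1) : ℕ) : ℝ) := by
      rw [hmk]; push_cast; ring
    rw [hexp]
    exact hsand x hx
  -- (3) → Star
  have h3S : (∃ C₁ C₂ ε : ℝ, 0 < C₂ ∧ C₂ ≤ C₁ ∧ 0 < ε ∧
      ∀ x : ℝ, |x| < ε → C₂ * |x| ^ (m+2) ≤ f x - 1 ∧ f x - 1 ≤ C₁ * |x| ^ (m+2)) → Star := by
    rintro ⟨C₁, C₂, ε, hC₂, hC₁₂, hε, hb⟩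
    obtain ⟨j, hmj, hder, hpos⟩ := sandwich_to_taylor g1 hg1 (m+2) (by linarith)
      C₂ C₁ ε hC₂ hε (fun x hx => hb x hx)
    have hj2 : 2 ≤ j := by
      by_contra hlt
      push_neg at hlt
      interval_cases j <;> (push_cast at hmj; linarith)
    refine ⟨j - 1, by omega, ?_, ?_, ?_⟩
    · have h1 : ((2*j : ℕ) : ℝ) = 2*(j:ℝ) := by push_cast; ring
      have h2 : ((2*(j-1) : ℕ) : ℝ) = 2*(j:ℝ) - 2 := by
        have : (j:ℝ) ≥ 2 := by exact_mod_cast hj2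
        push_cast [Nat.cast_sub (by omega : 1 ≤ j)]
        ring
      rw [h2]
      linarith [h1, hmj]
    · intro i hi
      rw [← hshift i]
      exact hder (i+2) (by omega)
    · have h2k2 : 2*(j-1) + 2 = 2*j := by omega
      rw [← hshift (2*(j-1)), h2k2]
      exact hpos
  -- Star → (2)
  have hS2 : Star → (∃ C₁ C₂ ε : ℝ, 0 < C₂ ∧ C₂ ≤ C₁ ∧ 0 < ε ∧
      ∀ x θ : ℝ, |x| < ε → -C₁ * |x| ^ m ≤ Ric x θ ∧ Ric x θ ≤ -C₂ * |x| ^ m) := by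
    rintro ⟨k, hk, hmk, hder, hpos⟩
    set L := iteratedDeriv (2*k) (deriv (deriv f)) 0 / (((2*k).factorial : ℕ) : ℝ) with hLdef
    have hL : 0 < L := div_pos hpos (by positivity)
    have ht2 := key_tendsto (2*k) (deriv (deriv f)) hF2 hder
    have hder1 : ∀ i, i < 2*k+1 → iteratedDeriv i (deriv f) 0 = 0 := by
      intro i hi
      match i with
      | 0 => simpa using hf'0
      | (j+1) =>
        rw [iteratedDeriv_succ']
        exact hder j (by omega)
    have ht1 := key_tendsto (2*k+1) (deriv f) hF1 hder1
    set Lb := |iteratedDeriv (2*k+1) (deriv f) 0 / (((2*k+1).factorial : ℕ) : ℝ)| + 1 with hLbdef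
    have hLb : 0 < Lb := by positivity
    have ev2a : ∀ᶠ x in 𝓝[≠] (0:ℝ), L/2 < deriv (deriv f) x / x ^ (2*k) :=
      ht2.eventually_const_lt (by linarith)
    have ev2b : ∀ᶠ x in 𝓝[≠] (0:ℝ), deriv (deriv f) x / x ^ (2*k) < 3*L/2 :=
      ht2.eventually_lt_const (by linarith)
    have ev1 : ∀ᶠ x in 𝓝[≠] (0:ℝ), |deriv f x / x ^ (2*k+1)| < Lb := by
      have h := ht1.abs.eventually_lt_const (show
        |iteratedDeriv (2*k+1) (deriv f) 0 / (((2*k+1).factorial : ℕ) : ℝ)| < Lb by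
        rw [hLbdef]; linarith)
      exact h
    have hball := (ev2a.and (ev2b.and ev1))
    rw [eventually_nhdsWithin_iff, Metric.eventually_nhds_iff] at hball
    obtain ⟨δ, hδ, hbb⟩ := hball
    have hn2 : (0:ℝ) ≤ (n:ℝ) - 2 := by
      have h2n : (2:ℝ) ≤ (n:ℝ) := by exact_mod_cast hn
      linarith
    refine ⟨3*L + ((n:ℝ) - 2) * (3*L + 4*Lb^2), L/4, min (min δ δ₀) 1, by positivity, ?_,
      by positivity, ?_⟩
    · nlinarith [mul_nonneg hn2 (show (0:ℝ) ≤ 3*L + 4*Lb^2 by positivity)]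
    intro x θ hx
    have hxδ : |x| < δ := lt_of_lt_of_le hx ((min_le_left _ _).trans (min_le_left _ _))
    have hxδ₀ : |x| < δ₀ := lt_of_lt_of_le hx ((min_le_left _ _).trans (min_le_right _ _))
    have hx1 : |x| < 1 := lt_of_lt_of_le hx (min_le_right _ _)
    obtain ⟨hfl, hfu⟩ := hfnear x hxδ₀
    have hfx : (0:ℝ) < f x := by linarith
    by_cases hx0 : x = 0
    · subst hx0
      have hF20 : deriv (deriv f) 0 = 0 := by
        have h := hder 0 (by omega); simpa using h
      have hw0 : |(0:ℝ)| ^ m = 0 := by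
        rw [abs_zero, Real.zero_rpow hm.ne']
      rw [hRic, hF20, hf'0, hw0]
      norm_num
    · have hP := hbb (show dist x 0 < δ by rw [Real.dist_eq, sub_zero]; exact hxδ) hx0
      obtain ⟨h2a, h2b, h1⟩ := hP
      have heven : Even (2*k) := ⟨k, by omega⟩
      have hxw : x ^ (2*k) = |x| ^ (2*k) := (heven.pow_abs x).symm
      have hw : (0:ℝ) < |x| ^ (2*k) := pow_pos (abs_pos.mpr hx0) _
      have hrw : |x| ^ m = |x| ^ (2*k) := by rw [hmk, Real.rpow_natCast]
      rw [hxw, lt_div_iff₀ hw] at h2a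
      rw [hxw, div_lt_iff₀ hw] at h2b
      have hF1b : |deriv f x| < Lb * |x| ^ (2*k+1) := by
        rw [abs_div, abs_pow] at h1
        have hpow : (0:ℝ) < |x| ^ (2*k+1) := pow_pos (abs_pos.mpr hx0) _
        rw [div_lt_iff₀ hpow] at h1
        exact h1
      have hq : (deriv f x)^2 ≤ Lb^2 * |x| ^ (2*k) := by
        have h1w : |deriv f x| ≤ Lb * |x| ^ (2*k+1) := hF1b.le
        have hsq : |deriv f x|^2 ≤ (Lb * |x| ^ (2*k+1))^2 :=
          pow_le_pow_left₀ (abs_nonneg _) h1w 2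
        rw [sq_abs] at hsq
        have hpp : (|x| ^ (2*k+1))^2 ≤ |x| ^ (2*k) := by
          rw [← pow_mul]
          apply pow_le_pow_of_le_one (abs_nonneg x) hx1.le
          omega
        nlinarith [sq_nonneg Lb]
      have hco : (0:ℝ) ≤ Real.cos θ ^ 2 := sq_nonneg _
      have hco1 : Real.cos θ ^ 2 ≤ 1 := Real.cos_sq_le_one θ
      have hs : (0:ℝ) ≤ Real.sin θ ^ 2 := sq_nonneg _
      have hs1 : Real.sin θ ^ 2 ≤ 1 := Real.sin_sq_le_one θ
      have hwpos : (0:ℝ) < |x| ^ (2*k) := hw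
      have hLw : (0:ℝ) ≤ L * |x| ^ (2*k) := mul_nonneg hL.le hw.le
      have hu_l : L/4 * |x| ^ (2*k) ≤ deriv (deriv f) x / f x := by
        rw [le_div_iff₀ hfx]
        nlinarith [mul_nonneg hLw (show (0:ℝ) ≤ 3/2 - f x by linarith)]
      have hu_u : deriv (deriv f) x / f x ≤ 3*L * |x| ^ (2*k) := by
        rw [div_le_iff₀ hfx]
        nlinarith [mul_nonneg hLw (show (0:ℝ) ≤ f x - 1/2 by linarith)]
      have hu_nn : (0:ℝ) ≤ deriv (deriv f) x / f x := le_trans (by positivity) hu_l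
      have hv : (deriv f x / f x)^2 ≤ 4 * Lb^2 * |x| ^ (2*k) := by
        rw [div_pow]
        rw [div_le_iff₀ (show (0:ℝ) < f x ^ 2 by positivity)]
        nlinarith [mul_nonneg (mul_nonneg (show (0:ℝ) ≤ Lb^2 by positivity) hw.le)
          (show (0:ℝ) ≤ 4 * f x ^ 2 - 1 by nlinarith)]
      have hv_nn : (0:ℝ) ≤ (deriv f x / f x)^2 := sq_nonneg _
      rw [hRic, hrw, neg_div]
      constructor
      · have huco : (deriv (deriv f) x / f x) * Real.cos θ ^ 2 ≤ 3*L*|x| ^ (2*k) := by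
          have h := mul_le_mul_of_nonneg_left hco1 hu_nn
          rw [mul_one] at h
          linarith
        have hvs : (deriv f x / f x)^2 * Real.sin θ ^ 2 ≤ 4*Lb^2*|x| ^ (2*k) := by
          have h := mul_le_mul_of_nonneg_left hs1 hv_nn
          rw [mul_one] at h
          linarith
        have hterm : ((n:ℝ) - 2) * (-(3*L*|x| ^ (2*k)) - 4*Lb^2*|x| ^ (2*k)) ≤
            ((n:ℝ) - 2) * (-(deriv (deriv f) x / f x) * Real.cos θ ^ 2
              - (deriv f x / f x)^2 * Real.sin θ ^ 2) :=
          mul_le_mul_of_nonneg_left (by linarith) hn2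
        linarith [hterm, hu_u]
      · have hterm : ((n:ℝ) - 2) * (-(deriv (deriv f) x / f x) * Real.cos θ ^ 2
            - (deriv f x / f x)^2 * Real.sin θ ^ 2) ≤ 0 := by
          apply mul_nonpos_of_nonneg_of_nonpos hn2
          have h1' := mul_nonneg hu_nn hco
          have h2' := mul_nonneg hv_nn hs
          nlinarith
        linarith [hterm, hu_l]
  -- (2) → (1)
  have h21 : (∃ C₁ C₂ ε : ℝ, 0 < C₂ ∧ C₂ ≤ C₁ ∧ 0 < ε ∧
      ∀ x θ : ℝ, |x| < ε → -C₁ * |x| ^ m ≤ Ric x θ ∧ Ric x θ ≤ -C₂ * |x| ^ m) →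
      (∃ C₁ C₂ ε : ℝ, 0 < C₂ ∧ C₂ ≤ C₁ ∧ 0 < ε ∧
      ∀ x : ℝ, |x| < ε → -C₁ * |x| ^ m ≤ Kperp x ∧ Kperp x ≤ -C₂ * |x| ^ m) := by
    rintro ⟨C₁, C₂, ε, hC₂, hC₁₂, hε, hb⟩
    have hn1 : (0:ℝ) < (n:ℝ) - 1 := by
      have h2n : (2:ℝ) ≤ (n:ℝ) := by exact_mod_cast hn
      linarith
    refine ⟨C₁/((n:ℝ)-1), C₂/((n:ℝ)-1), ε, div_pos hC₂ hn1,
      div_le_div_of_nonneg_right hC₁₂ hn1.le, hε, ?_⟩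
    intro x hx
    obtain ⟨hb1, hb2⟩ := hb x 0 hx
    have hRK : Ric x 0 = ((n:ℝ) - 1) * Kperp x := by
      rw [hRic, hK]
      simp [Real.cos_zero, Real.sin_zero]
      ring
    rw [hRK] at hb1 hb2
    constructor
    · have h : -(C₁/((n:ℝ)-1)) * |x| ^ m = (-C₁ * |x| ^ m)/((n:ℝ)-1) := by ring
      rw [h, div_le_iff₀ hn1]
      linarith [hb1]
    · have h : -(C₂/((n:ℝ)-1)) * |x| ^ m = (-C₂ * |x| ^ m)/((n:ℝ)-1) := by ring
      rw [h, le_div_iff₀ hn1]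
      linarith [hb2]
  exact ⟨⟨fun h1 => hS2 (h1S h1), h21⟩,
    ⟨fun h2 => hS3 (h1S (h21 h2)), fun h3 => hS2 (h3S h3)⟩⟩
end

section
/- Let U be a positive semidefinite symmetric (n-1)×(n-1) real matrix, K a symmetric matrix with -K positive semidefinite, and let U' = -U² - K (the Riccati equation). Define ψ = -tr(U) and φ - ψ = -tr(U(I + U²)^{-1} U'). Then |φ - ψ| ≤ (tr U)³ + (tr U)·tr(-K); i.e., |φ - ψ| ≤ (-ψ)((-ψ)² + tr(-K)). -/
/-!
With `V = (1 + U²)⁻¹`, which commutes with `U`, the Riccati equation splits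
`φ - ψ = tr(U³V) - tr(UV(-K))`. Both terms are traces of products of positive semidefinite
matrices, hence nonnegative, so `|φ - ψ|` is at most their sum. Since `U^k - U^k V = U^(k+2) V`,
`tr(U^k V) ≤ tr(U^k)`; together with `tr(AB) ≤ tr A · tr B` this bounds the first term by
`tr(U³) ≤ (tr U)³` and the second by `tr(UV) tr(-K) ≤ tr U · tr(-K)`.
-/

open scoped MatrixOrder ComplexOrder

namespace Matrix

variable {m n 𝕜 : Type*} [Fintype m] [Fintype n] [RCLike 𝕜]

lemma PosSemidef.mul_of_commute [DecidableEq n] {A B : Matrix n n 𝕜} (hA : A.PosSemidef)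
    (hB : B.PosSemidef) (h : Commute A B) : (A * B).PosSemidef :=
  nonneg_iff_posSemidef.mp (h.mul_nonneg hA.nonneg hB.nonneg)

lemma PosSemidef.trace_mul_nonneg {A B : Matrix n n 𝕜} (hA : A.PosSemidef) (hB : B.PosSemidef) :
    0 ≤ (A * B).trace := by
  classical
  obtain ⟨X, rfl⟩ := CStarAlgebra.nonneg_iff_eq_star_mul_self.mp hB.nonneg
  rw [star_eq_conjTranspose, ← mul_assoc, trace_mul_comm, ← mul_assoc]
  exact (hA.mul_mul_conjTranspose_same X).trace_nonneg

open scoped Matrix.Norms.Frobenius in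
lemma frobenius_norm_sq_eq_trace (M : Matrix m n ℝ) : ‖M‖ ^ 2 = (Mᴴ * M).trace := by
  rw [frobenius_norm_def, ← Real.rpow_natCast, ← Real.rpow_mul (by positivity)]
  norm_num
  simp [trace, mul_apply, sq, Finset.sum_comm (γ := m)]

open scoped Matrix.Norms.Frobenius in
lemma PosSemidef.trace_mul_le_trace_mul_trace {A B : Matrix n n ℝ} (hA : A.PosSemidef)
    (hB : B.PosSemidef) : (A * B).trace ≤ A.trace * B.trace := by
  classical
  obtain ⟨X, rfl⟩ := CStarAlgebra.nonneg_iff_eq_star_mul_self.mp hA.nonneg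
  obtain ⟨Y, rfl⟩ := CStarAlgebra.nonneg_iff_eq_star_mul_self.mp hB.nonneg
  simp only [star_eq_conjTranspose]
  -- `tr(XᴴX YᴴY)` is the squared Frobenius norm of `Y Xᴴ`, which is submultiplicative.
  have h : (Xᴴ * X * (Yᴴ * Y)).trace = ‖Y * Xᴴ‖ ^ 2 := by
    rw [frobenius_norm_sq_eq_trace, conjTranspose_mul, conjTranspose_conjTranspose,
      trace_mul_comm, ← mul_assoc, trace_mul_cycle]
    simp only [mul_assoc]
  rw [h, ← frobenius_norm_sq_eq_trace, ← frobenius_norm_sq_eq_trace,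
    ← frobenius_norm_conjTranspose X, ← mul_pow, mul_comm]
  gcongr
  exact frobenius_norm_mul _ _

lemma PosSemidef.trace_pow_succ_le [DecidableEq n] {A : Matrix n n ℝ} (hA : A.PosSemidef)
    (k : ℕ) :
    (A ^ (k + 1)).trace ≤ A.trace ^ (k + 1) := by
  induction k with
  | zero => simp
  | succ k ih =>
    calc (A ^ (k + 2)).trace = (A * A ^ (k + 1)).trace := by rw [pow_succ' A (k + 1)]
      _ ≤ A.trace * (A ^ (k + 1)).trace := hA.trace_mul_le_trace_mul_trace (hA.pow _)
      _ ≤ A.trace * A.trace ^ (k + 1) := by gcongr; exact hA.trace_nonneg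
      _ = A.trace ^ (k + 2) := by ring

section Resolvent

variable [DecidableEq n] {U : Matrix n n 𝕜}

lemma PosSemidef.posDef_one_add_sq (hU : U.PosSemidef) : (1 + U ^ 2).PosDef :=
  PosDef.one.add_posSemidef (hU.pow 2)

lemma PosSemidef.isUnit_one_add_sq (hU : U.PosSemidef) : IsUnit (1 + U ^ 2) :=
  (isUnit_iff_isUnit_det _).mpr hU.posDef_one_add_sq.det_pos.ne'.isUnit

lemma PosSemidef.commute_pow_inv_one_add_sq (hU : U.PosSemidef) (k : ℕ) :
    Commute (U ^ k) (1 + U ^ 2)⁻¹ := by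
  obtain ⟨u, hu⟩ := hU.isUnit_one_add_sq
  have h : Commute (U ^ k) u :=
    hu ▸ (Commute.one_right _).add_right ((Commute.refl U).pow_pow k 2)
  rw [← hu, ← coe_units_inv]
  exact h.units_inv_right

lemma PosSemidef.pow_mul_inv_one_add_sq (hU : U.PosSemidef) (k : ℕ) :
    (U ^ k * (1 + U ^ 2)⁻¹).PosSemidef :=
  (hU.pow k).mul_of_commute hU.posDef_one_add_sq.inv.posSemidef (hU.commute_pow_inv_one_add_sq k)

lemma PosSemidef.pow_sub_pow_mul_inv_one_add_sq (hU : U.PosSemidef) (k : ℕ) :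
    U ^ k - U ^ k * (1 + U ^ 2)⁻¹ = U ^ (k + 2) * (1 + U ^ 2)⁻¹ := by
  have h := mul_nonsing_inv _ ((isUnit_iff_isUnit_det _).mp hU.isUnit_one_add_sq)
  calc U ^ k - U ^ k * (1 + U ^ 2)⁻¹
        = U ^ k * ((1 + U ^ 2) * (1 + U ^ 2)⁻¹ - (1 + U ^ 2)⁻¹) := by rw [h]; noncomm_ring
    _ = U ^ (k + 2) * (1 + U ^ 2)⁻¹ := by noncomm_ring

lemma PosSemidef.trace_pow_mul_inv_one_add_sq_le (hU : U.PosSemidef) (k : ℕ) :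
    (U ^ k * (1 + U ^ 2)⁻¹).trace ≤ (U ^ k).trace := by
  rw [← sub_nonneg, ← trace_sub, hU.pow_sub_pow_mul_inv_one_add_sq]
  exact (hU.pow_mul_inv_one_add_sq (k + 2)).trace_nonneg

end Resolvent

end Matrix

theorem stmt17_general (n : ℕ) (U K : Matrix (Fin (n-1)) (Fin (n-1)) ℝ)
    (hU : U.PosSemidef) (hK : (-K).PosSemidef)
    (φ ψ : ℝ)
    (hφ : φ - ψ = -(U * (1 + U^2)⁻¹ * (-(U^2) - K)).trace) :
    |φ - ψ| ≤ U.trace^3 + U.trace * (-K).trace := by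
  set V := (1 + U ^ 2)⁻¹
  have hsplit : φ - ψ = (U ^ 3 * V).trace - (U * V * -K).trace := by
    rw [hφ, show U * V * (-(U ^ 2) - K) = -(U * V * U ^ 2) + U * V * -K by noncomm_ring,
      Matrix.trace_add, Matrix.trace_neg, Matrix.trace_mul_comm (U * V),
      show U ^ 2 * (U * V) = U ^ 3 * V by noncomm_ring]
    ring
  have hUV : (U * V).PosSemidef := by simpa using hU.pow_mul_inv_one_add_sq 1
  have hcube : (U ^ 3 * V).trace ≤ U.trace ^ 3 :=
    (hU.trace_pow_mul_inv_one_add_sq_le 3).trans (hU.trace_pow_succ_le 2)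
  have hcurv : (U * V * -K).trace ≤ U.trace * (-K).trace :=
    calc (U * V * -K).trace ≤ (U * V).trace * (-K).trace := hUV.trace_mul_le_trace_mul_trace hK
      _ ≤ U.trace * (-K).trace := by
        gcongr
        · exact hK.trace_nonneg
        · simpa using hU.trace_pow_mul_inv_one_add_sq_le 1
  have hcube_nonneg := (hU.pow_mul_inv_one_add_sq 3).trace_nonneg
  have hcurv_nonneg := hUV.trace_mul_nonneg hK
  rw [hsplit, abs_sub_le_iff]
  constructor <;> linarith

/-- Linear-algebra estimate comparing `φ^u` and `ψ^u`: with `U ⪰ 0` symmetric, `-K ⪰ 0`,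
`U' = -U² - K`, `ψ = -tr U` and `φ - ψ = -tr(U(I+U²)⁻¹U')`, one has
`|φ - ψ| ≤ (tr U)³ + (tr U)·tr(-K) = (-ψ)((-ψ)² + tr(-K))`. -/
theorem stmt17 (n : ℕ) (U K : Matrix (Fin (n-1)) (Fin (n-1)) ℝ)
    (hU : U.PosSemidef) (hK : (-K).PosSemidef)
    (φ ψ : ℝ) (hψ : ψ = -U.trace)
    (hφ : φ - ψ = -(U * (1 + U^2)⁻¹ * (-(U^2) - K)).trace) :
    |φ - ψ| ≤ U.trace^3 + U.trace * (-K).trace :=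
  stmt17_general n U K hU hK φ ψ hφ
end
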